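/- arXiv:1909.00802 — 8 statements merged into one kernel-verified Lean document; each statement's English description precedes it below -/
import Mathlib

section
/- Let L be a cyclic Galois extension of a field F of degree n, with Galois group generated by σ. Let 1 ≤ k ≤ n and let a₀,...,a_k ∈ L, not all zero. Then the F-linear transformation of L defined by f(x) = a₀x + a₁σ(x) + ... + a_k σ^k(x) has kernel of F-dimension at most k. -/
/-!
Put `m = n - k`. If `b : Fin m → L` satisfies `∑ⱼ bⱼ σʲ(f x) = 0` for all `x`, expanding gives the
operator identity `∑ᵢⱼ bⱼ σʲ(aᵢ) σ^(i+j) = 0`. All exponents are `< n = orderOf σ`, so by Dedekind's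
independence of characters the coefficient of each power of `σ` vanishes; but at `i₀ + j₀`, for the
least indices with `aᵢ₀ ≠ 0` and `bⱼ₀ ≠ 0`, the only contribution is `bⱼ₀ σ^j₀(aᵢ₀) ≠ 0`. So the
restrictions of `σ⁰, …, σ^(m-1)` to `range f` are `L`-linearly independent in `range f →ₗ[F] L`,
whose `L`-dimension is `dim_F (range f)`. Hence `n - k ≤ dim_F (range f)`, and rank–nullity concludes.
-/

open Finset

lemma exists_ne_zero_forall_lt_eq_zero {ι M : Type*} [LT ι] [WellFoundedLT ι] [Zero M]
    {a : ι → M} (ha : a ≠ 0) : ∃ i, a i ≠ 0 ∧ ∀ j < i, a j = 0 := by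
  obtain ⟨i, hi⟩ := Function.ne_iff.mp ha
  obtain ⟨i₀, hi₀, hmin⟩ := wellFounded_lt.has_min {i | a i ≠ 0} ⟨i, hi⟩
  exact ⟨i₀, hi₀, fun j hj => by_contra fun h => hmin j h hj⟩

section

variable {F L : Type*} [Field F] [Field L] [Algebra F L]

lemma AlgEquiv.linearIndependent_toLinearMap :
    LinearIndependent L (fun τ : L ≃ₐ[F] L => τ.toLinearMap) :=
  (_root_.linearIndependent_toLinearMap F L L).comp (fun τ : L ≃ₐ[F] L => (τ : L →ₐ[F] L))
    AlgEquiv.coe_toAlgHom_injective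

lemma AlgEquiv.sum_pow_apply_sum_pow (σ : L ≃ₐ[F] L) {p q : ℕ} (a : Fin p → L) (b : Fin q → L)
    (x : L) :
    ∑ j : Fin q, b j * (σ ^ (j : ℕ)) (∑ i : Fin p, a i * (σ ^ (i : ℕ)) x) =
      ∑ ij : Fin p × Fin q, b ij.2 * (σ ^ (ij.2 : ℕ)) (a ij.1) * (σ ^ (ij.1 + ij.2 : ℕ)) x := by
  simp only [Fintype.sum_prod_type_right, map_sum, map_mul, mul_sum, mul_assoc,
    ← AlgEquiv.mul_apply, ← pow_add, add_comm]

lemma AlgEquiv.eq_zero_of_sum_pow_apply_sum_pow_eq_zero (σ : L ≃ₐ[F] L) {p q : ℕ}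
    (hpq : p + q ≤ orderOf σ + 1) {a : Fin p → L} (ha : a ≠ 0) {b : Fin q → L}
    (h : ∀ x, ∑ j : Fin q, b j * (σ ^ (j : ℕ)) (∑ i : Fin p, a i * (σ ^ (i : ℕ)) x) = 0) :
    b = 0 := by
  classical
  by_contra hb
  obtain ⟨i₀, hai₀, ha_lt⟩ := exists_ne_zero_forall_lt_eq_zero ha
  obtain ⟨j₀, hbj₀, hb_lt⟩ := exists_ne_zero_forall_lt_eq_zero hb
  let c : (L ≃ₐ[F] L) →₀ L := ∑ ij : Fin p × Fin q,
    Finsupp.single (σ ^ (ij.1 + ij.2 : ℕ)) (b ij.2 * (σ ^ (ij.2 : ℕ)) (a ij.1))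
  have hc : c = 0 := by
    have hli := AlgEquiv.linearIndependent_toLinearMap (F := F) (L := L)
    refine linearIndependent_iff.mp hli c ?_
    ext x
    simp only [c, map_sum, Finsupp.linearCombination_single, LinearMap.sum_apply,
      LinearMap.smul_apply, AlgEquiv.toLinearMap_apply, smul_eq_mul, LinearMap.zero_apply]
    rw [← sum_pow_apply_sum_pow, h x]
  have hexp_lt : ∀ ij : Fin p × Fin q, (ij.1 + ij.2 : ℕ) ∈ Set.Iio (orderOf σ) :=
    fun ij => Set.mem_Iio.mpr (by omega)
  have hc₀ : c (σ ^ (i₀ + j₀ : ℕ)) = b j₀ * (σ ^ (j₀ : ℕ)) (a i₀) := by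
    rw [Finsupp.finsetSum_apply, Finset.sum_eq_single (i₀, j₀)]
    · simp
    · rintro ⟨i, j⟩ - hij
      rw [Finsupp.single_apply, ite_eq_right_iff]
      intro heq
      have hsum : (i + j : ℕ) = i₀ + j₀ :=
        pow_injOn_Iio_orderOf (hexp_lt (i, j)) (hexp_lt (i₀, j₀)) heq
      rcases lt_trichotomy j j₀ with hj | rfl | hj
      · rw [hb_lt j hj, zero_mul]
      · exact (hij (Prod.ext (Fin.ext (by dsimp only; omega)) rfl)).elim
      · rw [ha_lt i (by omega), map_zero, mul_zero]
    · simp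
  rw [hc, Finsupp.zero_apply] at hc₀
  exact mul_ne_zero hbj₀ ((map_ne_zero _).mpr hai₀) hc₀.symm

end

theorem stmt_0_general (F L : Type*) [Field F] [Field L] [Algebra F L]
    [FiniteDimensional F L] [IsGalois F L] (n : ℕ)
    (hn : Module.finrank F L = n)
    (σ : L ≃ₐ[F] L) (hσ : ∀ τ : L ≃ₐ[F] L, τ ∈ Subgroup.zpowers σ)
    (k : ℕ) (hkn : k ≤ n)
    (a : Fin (k + 1) → L) (ha : a ≠ 0)
    (f : L →ₗ[F] L)
    (hf : ∀ x, f x = ∑ i : Fin (k + 1), a i * (σ ^ (i : ℕ)) x) :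
    Module.finrank F (LinearMap.ker f) ≤ k := by
  have horder : orderOf σ = n := by
    rw [orderOf_eq_card_of_forall_mem_zpowers hσ, IsGalois.card_aut_eq_finrank, hn]
  have hindep : LinearIndependent L
      (fun j : Fin (n - k) => (σ ^ (j : ℕ)).toLinearMap ∘ₗ (LinearMap.range f).subtype) := by
    refine Fintype.linearIndependent_iff.mpr fun b hb => congr_fun ?_
    refine σ.eq_zero_of_sum_pow_apply_sum_pow_eq_zero (by omega) ha fun x => ?_
    rw [← hf]
    simpa using LinearMap.congr_fun hb ⟨f x, LinearMap.mem_range_self f x⟩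
  have hrange := hindep.fintype_card_le_finrank
  rw [Fintype.card_fin, Module.finrank_linearMap_self] at hrange
  have hrank_nullity := f.finrank_range_add_finrank_ker
  omega

theorem stmt_0 (F L : Type*) [Field F] [Field L] [Algebra F L]
    [FiniteDimensional F L] [IsGalois F L] (n : ℕ)
    (hn : Module.finrank F L = n)
    (σ : L ≃ₐ[F] L) (hσ : ∀ τ : L ≃ₐ[F] L, τ ∈ Subgroup.zpowers σ)
    (k : ℕ) (hk1 : 1 ≤ k) (hkn : k ≤ n)
    (a : Fin (k + 1) → L) (ha : a ≠ 0)
    (f : L →ₗ[F] L)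
    (hf : ∀ x, f x = ∑ i : Fin (k + 1), a i * (σ ^ (i : ℕ)) x) :
    Module.finrank F (LinearMap.ker f) ≤ k :=
  stmt_0_general F L n hn σ hσ k hkn a ha f hf
end

section
/- Let f(x) = -x + b₀x^σ + b₁x^{σq^n} + ... + b_{t-1}x^{σq^{n(t-1)}} ∈ F_{q^{nt}}[x], where σ ∈ Aut(F_{q^{nt}}) restricts to an automorphism of F_{q^n} of order n. Then the F_q-dimension of the set of roots of f in F_{q^{nt}} is at most t. -/
/-!
Put `h x = x + f x = ∑ bᵢ σ(x)^(q^(n i))`. Since `c^(q^(n i)) = c` for `c ∈ F_{q^n}`, the map `h` is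
`σ'`-semilinear over `F_{q^n}`, and the roots of `f` are exactly its fixed points. As `σ'` has
order `n = [F_{q^n} : F_q]`, its fixed field is `F_q`; so fixed points of `h` that are
`F_q`-independent stay `F_{q^n}`-independent (Artin's descent argument), and there are at most
`dim_{F_{q^n}} F_{q^{nt}} = t` of them.
-/

open Module Submodule

theorem Module.finrank_eq_of_card_eq_pow {K V : Type*} [DivisionRing K] [AddCommGroup V]
    [Module K V] [Fintype K] [Fintype V] {q m : ℕ} (hK : Fintype.card K = q)
    (hV : Fintype.card V = q ^ m) :
    finrank K V = m :=
  Nat.pow_right_injective (hK ▸ Fintype.one_lt_card)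
    (show q ^ _ = q ^ m by rw [← hV, card_eq_pow_finrank (K := K), hK])

theorem IsGalois.mem_range_algebraMap_of_orderOf_eq_finrank {k K : Type*} [Field k] [Field K]
    [Algebra k K] [FiniteDimensional k K] [IsGalois k K] (σ : K ≃ₐ[k] K)
    (hσ : orderOf σ = finrank k K) {c : K} (hc : σ c = c) : c ∈ Set.range (algebraMap k K) := by
  have hgen : Subgroup.zpowers σ = ⊤ := Subgroup.eq_top_of_card_eq _ <| by
    rw [Nat.card_zpowers, hσ, IsGalois.card_aut_eq_finrank]
  rw [← IntermediateField.mem_bot, IsGalois.mem_bot_iff_fixed]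
  intro g
  obtain ⟨m, rfl⟩ := mem_powers_iff_mem_zpowers.mpr (hgen ▸ Subgroup.mem_top g)
  show (σ ^ m) c = c
  rw [AlgEquiv.coe_pow]
  exact Function.IsFixedPt.iterate hc m

section SemilinearFixedPoints

variable {k K V : Type*} [Field k] [Field K] [Algebra k K] [AddCommGroup V] [Module K V]
  [Module k V] [IsScalarTower k K V] {σ : K →+* K}
  (hσ : ∀ c, σ c = c → c ∈ Set.range (algebraMap k K)) (h : V →ₛₗ[σ] V)
include hσ

theorem mem_span_of_semilinear_fixed {ι : Type*} [Fintype ι] {v : ι → V}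
    (hv : LinearIndependent K v) (hfix : ∀ i, h (v i) = v i) {x : V}
    (hx : x ∈ span K (Set.range v)) (hxfix : h x = x) : x ∈ span k (Set.range v) := by
  obtain ⟨c, rfl⟩ := mem_span_range_iff_exists_fun K |>.mp hx
  -- `x = ∑ cᵢ vᵢ = ∑ σ(cᵢ) vᵢ`, so uniqueness of coordinates makes every `cᵢ` `σ`-fixed
  have hc : ∀ i, σ (c i) = c i := by
    refine Fintype.linearIndependent_iffₛ.mp hv _ _ ?_
    simpa only [map_sum, LinearMap.map_smulₛₗ, hfix] using hxfix
  choose a ha using fun i => hσ _ (hc i)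
  refine mem_span_range_iff_exists_fun k |>.mpr ⟨a, ?_⟩
  simp only [← ha, algebraMap_smul]

theorem LinearIndependent.of_semilinear_fixed {ι : Type*} {v : ι → V}
    (hv : LinearIndependent k v) (hfix : ∀ i, h (v i) = v i) : LinearIndependent K v := by
  classical
  refine linearIndependent_iff_finset_linearIndependent.mpr fun s => ?_
  induction s using Finset.induction_on with
  | empty => exact linearIndependent_empty_type
  | insert a s has ih =>
    change LinearIndepOn K v (insert a s : Finset ι)
    rw [Finset.coe_insert, linearIndepOn_insert has, Set.image_eq_range]
    refine ⟨ih, fun hspan => ?_⟩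
    have hk := hv.linearIndepOn (s := insert a (s : Set ι))
    rw [linearIndepOn_insert has, Set.image_eq_range] at hk
    exact hk.2 (mem_span_of_semilinear_fixed hσ h ih (fun i => hfix i) hspan (hfix a))

theorem finrank_le_of_forall_semilinear_fixed [FiniteDimensional K V] (W : Submodule k V)
    (hW : ∀ x ∈ W, h x = x) : finrank k W ≤ finrank K V := by
  by_cases hfin : Module.Finite k W
  · let B := Module.finBasis k W
    have hB := (B.linearIndependent.map' W.subtype W.ker_subtype).of_semilinear_fixed hσ h
      fun i => hW _ (B i).2
    simpa using hB.fintype_card_le_finrank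
  · simp [finrank_of_not_finite hfin]

end SemilinearFixedPoints

theorem sum_mul_map_pow_card_pow_smul {K F ι : Type*} [Field K] [Fintype K] [Field F]
    [Algebra K F] [Fintype ι] {σ : F →+* F} {σ' : K →+* K}
    (hres : ∀ c, σ (algebraMap K F c) = algebraMap K F (σ' c)) (b : ι → F) (e : ι → ℕ)
    (c : K) (x : F) :
    ∑ i, b i * σ (c • x) ^ Fintype.card K ^ e i =
      σ' c • ∑ i, b i * σ x ^ Fintype.card K ^ e i := by
  simp only [Algebra.smul_def, map_mul, hres, mul_pow, ← map_pow, FiniteField.pow_card_pow,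
    Finset.mul_sum, mul_left_comm]

theorem stmt_3 (q n t : ℕ) (Fq Fqn F : Type*) [Field Fq] [Field Fqn] [Field F]
    [Algebra Fq Fqn] [Algebra Fqn F] [Algebra Fq F] [IsScalarTower Fq Fqn F]
    [Fintype Fq] [Fintype Fqn] [Fintype F]
    (hq : Fintype.card Fq = q) (hqn : Fintype.card Fqn = q ^ n)
    (hF : Fintype.card F = q ^ (n * t))
    (σ : F ≃ₐ[Fq] F) (σ' : Fqn ≃ₐ[Fq] Fqn) (hord : orderOf σ' = n)
    (hres : ∀ c : Fqn, σ (algebraMap Fqn F c) = algebraMap Fqn F (σ' c))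
    (b : Fin t → F)
    (f : F →ₗ[Fq] F)
    (hf : ∀ x, f x = -x + ∑ i : Fin t, b i * σ x ^ q ^ (n * (i : ℕ))) :
    Module.finrank Fq (LinearMap.ker f) ≤ t := by
  have : FiniteDimensional Fq Fqn := .of_finite
  have hσ' : ∀ c, σ' c = c → c ∈ Set.range (algebraMap Fq Fqn) := fun _ =>
    IsGalois.mem_range_algebraMap_of_orderOf_eq_finrank σ'
      (hord.trans (finrank_eq_of_card_eq_pow hq hqn).symm)
  have hsum : ∀ x, x + f x = ∑ i : Fin t, b i * σ x ^ Fintype.card Fqn ^ (i : ℕ) := fun x => by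
    simp only [hf, hqn, pow_mul, add_neg_cancel_left]
  let h : F →ₛₗ[(σ' : Fqn →+* Fqn)] F :=
    { toFun := fun x => x + f x
      map_add' := fun x y => by simp only [map_add]; abel
      map_smul' := fun c x => by
        simp only [hsum]
        exact sum_mul_map_pow_card_pow_smul (σ := (σ : F →+* F)) hres b _ c x }
  calc finrank Fq (LinearMap.ker f)
      ≤ finrank Fqn F := finrank_le_of_forall_semilinear_fixed hσ' h _ fun x hx => by
        simp [h, LinearMap.mem_ker.mp hx]
    _ = t := finrank_eq_of_card_eq_pow hqn (by rw [hF, pow_mul])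
end

section
/- Let G(x) = Σ_{i=0}^{t-1} b_i x^{q^{ni}} be a q^n-polynomial over F_{q^{nt}}, let σ ∈ Aut(F_{q^{nt}}) restrict to an automorphism of F_{q^n} of order n, set H = G∘σ, and let f = H - id. Then f has a nonzero root in F_{q^{nt}} if and only if H^n - id has a nonzero root in F_{q^{nt}} (where H^n denotes the n-fold composition of H). -/
/-!
The map `H` is additive and `σ'`-semilinear over `F_{q^n}`, since `x ↦ x ^ q ^ (n i)` is
`F_{q^n}`-linear. Given `y ≠ 0` with `Hⁿ y = y`, every sum `∑_{k<n} σ'ᵏ(a) • Hᵏ(y)` is fixed by `H`,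
exactly as in the additive Hilbert 90, and Dedekind's independence of the distinct characters
`σ'ᵏ` shows that one of them is nonzero.
-/

open Finset

section TwistedOrbitSum

variable {R K L : Type*} [CommSemiring R] [Field K] [Algebra R K] [CommRing L] [Algebra K L]

theorem LinearMap.iterate_map_smulₛₗ {τ : K ≃ₐ[R] K} (H : L →ₛₗ[(τ : K →+* K)] L) (k : ℕ)
    (c : K) (x : L) : H^[k] (c • x) = (τ ^ k) c • H^[k] x := by
  induction k generalizing c x with
  | zero => rfl
  | succ k ih =>
    rw [Function.iterate_succ_apply', Function.iterate_succ_apply', ih, LinearMap.map_smulₛₗ,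
      pow_succ', AlgEquiv.mul_apply]
    rfl

def twistedOrbitSum (H : L → L) (τ : K ≃ₐ[R] K) (n : ℕ) (y : L) (a : K) : L :=
  ∑ k ∈ range n, (τ ^ k) a • H^[k] y

theorem Finset.sum_range_succ_shift_of_eq {M : Type*} [AddCancelCommMonoid M] {f : ℕ → M} {n : ℕ}
    (h : f n = f 0) : ∑ k ∈ range n, f (k + 1) = ∑ k ∈ range n, f k := by
  apply add_right_cancel (b := f 0)
  rw [← sum_range_succ', sum_range_succ, h]

theorem map_twistedOrbitSum {τ : K ≃ₐ[R] K} (H : L →ₛₗ[(τ : K →+* K)] L) {n : ℕ}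
    (hτ : τ ^ n = 1) {y : L} (hy : H^[n] y = y) (a : K) :
    H (twistedOrbitSum H τ n y a) = twistedOrbitSum H τ n y a := by
  have hshift (k : ℕ) : H ((τ ^ k) a • H^[k] y) = (τ ^ (k + 1)) a • H^[k + 1] y := by
    rw [← LinearMap.iterate_map_smulₛₗ, ← LinearMap.iterate_map_smulₛₗ,
      Function.iterate_succ_apply']
  simp only [twistedOrbitSum, map_sum, hshift]
  exact sum_range_succ_shift_of_eq (f := fun k => (τ ^ k) a • H^[k] y) (by simp [hτ, hy])

variable [IsDomain L]

theorem exists_twistedOrbitSum_ne_zero (H : L → L) {τ : K ≃ₐ[R] K} (hτ : IsOfFinOrder τ)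
    {y : L} (hy : y ≠ 0) : ∃ a, twistedOrbitSum H τ (orderOf τ) y a ≠ 0 := by
  by_contra! hzero
  let χ : Fin (orderOf τ) → K →* L := fun k => (algebraMap K L).comp (τ ^ (k : ℕ) : K →+* K)
  have hχ : Function.Injective χ := by
    intro k j hkj
    have hpow : τ ^ (k : ℕ) = τ ^ (j : ℕ) := AlgEquiv.ext fun a =>
      (algebraMap K L).injective (by simpa [χ] using DFunLike.congr_fun hkj a)
    exact Fin.ext (pow_injOn_Iio_orderOf k.isLt j.isLt hpow)
  have hsum : ∑ k : Fin (orderOf τ), H^[k] y • ⇑(χ k) = 0 := by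
    ext a
    simpa [twistedOrbitSum, χ, Algebra.smul_def, mul_comm, ← Fin.sum_univ_eq_sum_range]
      using hzero a
  have := Fintype.linearIndependent_iff.mp ((linearIndependent_monoidHom K L).comp χ hχ) _ hsum
    ⟨0, hτ.orderOf_pos⟩
  exact hy this

theorem LinearMap.exists_fixed_of_iterate_orderOf {τ : K ≃ₐ[R] K} (hτ : IsOfFinOrder τ)
    (H : L →ₛₗ[(τ : K →+* K)] L) {y : L} (hy : y ≠ 0) (hny : H^[orderOf τ] y = y) :
    ∃ z ≠ 0, H z = z := by
  obtain ⟨a, ha⟩ := exists_twistedOrbitSum_ne_zero H hτ hy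
  exact ⟨_, ha, map_twistedOrbitSum H (pow_orderOf_eq_one τ) hny a⟩

end TwistedOrbitSum

namespace FiniteField

variable (K : Type*) {L : Type*} [Field K] [Fintype K] [CommRing L] [Algebra K L]

def linearizedMap {t : ℕ} (b : Fin t → L) : L →ₗ[K] L :=
  ∑ i, b i • ((frobeniusAlgHom K L) ^ (i : ℕ)).toLinearMap

theorem linearizedMap_apply {t : ℕ} (b : Fin t → L) (x : L) :
    linearizedMap K b x = ∑ i, b i * x ^ Fintype.card K ^ (i : ℕ) := by
  simp [linearizedMap, AlgHom.coe_pow, coe_frobeniusAlgHom, pow_iterate]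

end FiniteField

def RingHom.toSemilinearMapOfRestrict {K L : Type*} [CommSemiring K] [Semiring L] [Algebra K L]
    (σ : L →+* L) (τ : K →+* K) (h : ∀ c, σ (algebraMap K L c) = algebraMap K L (τ c)) :
    L →ₛₗ[τ] L where
  toFun := σ
  map_add' := map_add σ
  map_smul' c x := by simp [Algebra.smul_def, h]

theorem stmt_4_general (q n t : ℕ) (Fq Fqn F : Type*) [Field Fq] [Field Fqn] [Field F]
    [Algebra Fq Fqn] [Algebra Fqn F] [Algebra Fq F]
    [Fintype Fqn]
    (hqn : Fintype.card Fqn = q ^ n)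
    (σ : F ≃ₐ[Fq] F) (σ' : Fqn ≃ₐ[Fq] Fqn) (hord : orderOf σ' = n)
    (hres : ∀ c : Fqn, σ (algebraMap Fqn F c) = algebraMap Fqn F (σ' c))
    (b : Fin t → F)
    (H : F → F) (hH : ∀ x, H x = ∑ i : Fin t, b i * σ x ^ q ^ (n * (i : ℕ))) :
    (∃ y : F, y ≠ 0 ∧ H y = y) ↔ (∃ y : F, y ≠ 0 ∧ H^[n] y = y) := by
  refine ⟨fun ⟨y, hy, hHy⟩ => ⟨y, hy, Function.iterate_fixed hHy n⟩, fun ⟨y, hy, hny⟩ => ?_⟩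
  let Hₛₗ : F →ₛₗ[(σ' : Fqn →+* Fqn)] F := (FiniteField.linearizedMap Fqn b).comp
    ((σ : F →+* F).toSemilinearMapOfRestrict (σ' : Fqn →+* Fqn) hres)
  have hHₛₗ : H = Hₛₗ := funext fun x => by
    simp [Hₛₗ, hH, FiniteField.linearizedMap_apply, hqn, pow_mul, RingHom.toSemilinearMapOfRestrict]
  subst hord hHₛₗ
  exact Hₛₗ.exists_fixed_of_iterate_orderOf (isOfFinOrder_of_finite σ') hy hny

theorem stmt_4 (q n t : ℕ) (Fq Fqn F : Type*) [Field Fq] [Field Fqn] [Field F]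
    [Algebra Fq Fqn] [Algebra Fqn F] [Algebra Fq F] [IsScalarTower Fq Fqn F]
    [Fintype Fq] [Fintype Fqn] [Fintype F]
    (hq : Fintype.card Fq = q) (hqn : Fintype.card Fqn = q ^ n)
    (hF : Fintype.card F = q ^ (n * t))
    (σ : F ≃ₐ[Fq] F) (σ' : Fqn ≃ₐ[Fq] Fqn) (hord : orderOf σ' = n)
    (hres : ∀ c : Fqn, σ (algebraMap Fqn F c) = algebraMap Fqn F (σ' c))
    (b : Fin t → F)
    (H : F → F) (hH : ∀ x, H x = ∑ i : Fin t, b i * σ x ^ q ^ (n * (i : ℕ))) :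
    (∃ y : F, y ≠ 0 ∧ H y = y) ↔ (∃ y : F, y ≠ 0 ∧ H^[n] y = y) :=
  stmt_4_general q n t Fq Fqn F hqn σ σ' hord hres b H hH
end

section
/- With H = G∘σ as above and L = H^{n-1} + H^{n-2} + ... + H + id, the kernel of f = H - id equals the image under L of the set E₁(H^n) = {y ∈ F_{q^{nt}} : H^n(y) = y}, i.e., ker f = L(E₁(H^n)). -/
/-!
`H` is additive, and it is `σ'`-semilinear because every `c ∈ F_{q^n}` satisfies
`c ^ q ^ (n * i) = c`. For an additive map, telescoping shows that `H^n y = y` makes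
`L y = ∑_{j<n} H^j y` a fixed point of `H`. Conversely, if `H x = x` then `H^j (λ • x) = σ'^j λ • x`,
so `λ • x` is fixed by `H^n` and `L (λ • x) = Tr λ • x` with `Tr = ∑_{j<n} σ'^j`. By Dedekind's
independence of characters `Tr` is not identically zero, and its values are `σ'`-invariant, so
rescaling gives `λ` with `Tr λ = 1`.
-/

open Finset

theorem AddMonoidHom.map_sum_range_iterate_of_iterate_eq {M : Type*} [AddCommMonoid M]
    (f : M →+ M) {n : ℕ} {y : M} (hy : f^[n] y = y) :
    f (∑ i ∈ Finset.range n, f^[i] y) = ∑ i ∈ Finset.range n, f^[i] y := by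
  rw [map_sum]
  simp only [← Function.iterate_succ_apply' f]
  cases n with
  | zero => simp
  | succ n =>
    rw [sum_range_succ, hy, sum_range_succ' (fun i => f^[i] y), Function.iterate_zero_apply]

theorem Function.iterate_smul_of_map_smul {R M : Type*} [SMul R M] {f : M → M} {s : R → R}
    (hf : ∀ (c : R) (x : M), f (c • x) = s c • f x) (m : ℕ) (c : R) (x : M) :
    f^[m] (c • x) = s^[m] c • f^[m] x := by
  induction m with
  | zero => rfl
  | succ m ih => simp only [Function.iterate_succ_apply', ih, hf]

theorem AlgEquiv.exists_sum_range_iterate_ne_zero {k K : Type*} [CommSemiring k] [Field K]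
    [Algebra k K] (g : K ≃ₐ[k] K) (hg : 0 < orderOf g) :
    ∃ μ : K, ∑ i ∈ range (orderOf g), g^[i] μ ≠ 0 := by
  have hinj :
      Function.Injective fun i : Fin (orderOf g) => ((g ^ (i : ℕ) : K ≃ₐ[k] K) : K →* K) := by
    intro i j hij
    have : g ^ (i : ℕ) = g ^ (j : ℕ) := AlgEquiv.ext fun x => DFunLike.congr_fun hij x
    exact Fin.ext (pow_injOn_Iio_orderOf i.isLt j.isLt this)
  have hli := (linearIndependent_monoidHom K K).comp _ hinj
  by_contra! hzero
  have := Fintype.linearIndependent_iff.1 hli (fun _ => 1) (funext fun μ => by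
    simpa [Fin.sum_univ_eq_sum_range (fun i => g^[i] μ)] using hzero μ) ⟨0, hg⟩
  exact one_ne_zero this

theorem AlgEquiv.exists_sum_range_iterate_eq_one {k K : Type*} [CommSemiring k] [Field K]
    [Algebra k K] (g : K ≃ₐ[k] K) (hg : 0 < orderOf g) :
    ∃ l : K, ∑ i ∈ range (orderOf g), g^[i] l = 1 := by
  obtain ⟨μ, hμ⟩ := g.exists_sum_range_iterate_ne_zero hg
  set c := ∑ i ∈ range (orderOf g), g^[i] μ
  have hfix : g c = c := g.toAddMonoidHom.map_sum_range_iterate_of_iterate_eq (by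
    show g^[orderOf g] μ = μ
    rw [← AlgEquiv.coe_pow, pow_orderOf_eq_one, AlgEquiv.one_apply])
  refine ⟨c⁻¹ * μ, ?_⟩
  have hscale : ∀ i, g^[i] (c⁻¹ * μ) = c⁻¹ * g^[i] μ := fun i => by
    rw [← AlgEquiv.coe_pow, map_mul, map_inv₀, AlgEquiv.coe_pow, Function.iterate_fixed hfix]
  rw [sum_congr rfl fun i _ => hscale i, ← mul_sum, inv_mul_cancel₀ hμ]

theorem FiniteField.add_pow_card_pow (K : Type*) {R : Type*} [Field K] [Fintype K] [CommRing R]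
    [Algebra K R] (m : ℕ) (x y : R) :
    (x + y) ^ Fintype.card K ^ m = x ^ Fintype.card K ^ m + y ^ Fintype.card K ^ m := by
  simpa [coe_frobeniusAlgHom, pow_iterate] using map_add (frobeniusAlgHom K R ^ m) x y

theorem stmt_6_general (q n t : ℕ) (Fq Fqn F : Type*) [Field Fq] [Field Fqn] [Field F]
    [Algebra Fq Fqn] [Algebra Fqn F] [Algebra Fq F]
    [Fintype Fq] [Fintype Fqn]
    (hq : Fintype.card Fq = q) (hqn : Fintype.card Fqn = q ^ n)
    (σ : F ≃ₐ[Fq] F) (σ' : Fqn ≃ₐ[Fq] Fqn) (hord : orderOf σ' = n)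
    (hres : ∀ c : Fqn, σ (algebraMap Fqn F c) = algebraMap Fqn F (σ' c))
    (b : Fin t → F)
    (H : F → F) (hH : ∀ x, H x = ∑ i : Fin t, b i * σ x ^ q ^ (n * (i : ℕ))) :
    {x : F | H x = x} =
      (fun y => ∑ j ∈ Finset.range n, H^[j] y) '' {y : F | H^[n] y = y} := by
  have hadd : ∀ x y, H (x + y) = H x + H y := fun x y => by
    simp only [hH, map_add, ← hq, FiniteField.add_pow_card_pow, mul_add, sum_add_distrib]
  have hsemi : ∀ (c : Fqn) (x : F), H (c • x) = σ' c • H x := fun c x => by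
    have hfix : ∀ i : Fin t, σ' c ^ q ^ (n * (i : ℕ)) = σ' c := fun i => by
      rw [pow_mul, ← hqn, FiniteField.pow_card_pow]
    simp only [hH, Algebra.smul_def, map_mul, hres, mul_pow, ← map_pow, hfix, mul_sum,
      mul_left_comm]
  subst hord
  ext x
  constructor
  · intro (hx : H x = x)
    obtain ⟨l, hl⟩ := σ'.exists_sum_range_iterate_eq_one (orderOf_pos σ')
    refine ⟨l • x, ?_, ?_⟩
    · show H^[_] (l • x) = l • x
      rw [Function.iterate_smul_of_map_smul hsemi, Function.iterate_fixed hx,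
        ← AlgEquiv.coe_pow, pow_orderOf_eq_one, AlgEquiv.one_apply]
    · simp only [Function.iterate_smul_of_map_smul hsemi, Function.iterate_fixed hx, ← sum_smul,
        hl, one_smul]
  · rintro ⟨y, hy, rfl⟩
    exact (AddMonoidHom.mk' H hadd).map_sum_range_iterate_of_iterate_eq hy

theorem stmt_6 (q n t : ℕ) (Fq Fqn F : Type*) [Field Fq] [Field Fqn] [Field F]
    [Algebra Fq Fqn] [Algebra Fqn F] [Algebra Fq F] [IsScalarTower Fq Fqn F]
    [Fintype Fq] [Fintype Fqn] [Fintype F]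
    (hq : Fintype.card Fq = q) (hqn : Fintype.card Fqn = q ^ n)
    (hF : Fintype.card F = q ^ (n * t))
    (σ : F ≃ₐ[Fq] F) (σ' : Fqn ≃ₐ[Fq] Fqn) (hord : orderOf σ' = n)
    (hres : ∀ c : Fqn, σ (algebraMap Fqn F c) = algebraMap Fqn F (σ' c))
    (b : Fin t → F)
    (H : F → F) (hH : ∀ x, H x = ∑ i : Fin t, b i * σ x ^ q ^ (n * (i : ℕ))) :
    {x : F | H x = x} =
      (fun y => ∑ j ∈ Finset.range n, H^[j] y) '' {y : F | H^[n] y = y} :=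
  stmt_6_general q n t Fq Fqn F hq hqn σ σ' hord hres b H hH
end

section
/- Let f(x) = -x + ax^{q^s} + bx^{q^{s+ℓn}} over F_{q^{nt}} with gcd(s,n)=1, a,b ≠ 0, 1 ≤ ℓ ≤ t-1. If t ≤ nℓ + s and s + hℓ ≢ 0 (mod t) for every 0 ≤ h ≤ n, then dim_{F_q} ker f ≤ min{t-1, (n-1)ℓ + s}. -/
/-!
`H x = a x^{q^s} + b x^{q^{s+ℓn}}` is `F_q`-linear and `σ^s`-semilinear over `F_{q^n}`, and
`ker f` is its fixed space. As `gcd(s, n) = 1`, the fixed field of `σ^s` is `F_q`, so Artin's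
argument shows that `F_q`-independent fixed vectors of `H` stay `F_{q^n}`-independent; hence
`dim_{F_q} ker f ≤ dim_{F_{q^n}} ker (H^n - id)`. Now `H^n x = ∑_{k ≤ n} c_k x^{q^{n(s+kℓ)}}`, and
since `x^{q^{nt}} = x` the exponents reduce to `q^{n r_k}` with `r_k = (s + kℓ) mod t`, where
`1 ≤ r_k ≤ min (t-1) ((n-1)ℓ+s)`. So `ker (H^n - id)` lies in the roots of a nonzero polynomial
of degree at most `q^{n min (t-1) ((n-1)ℓ+s)}`, which bounds its `F_{q^n}`-dimension.
-/

open Finset Polynomial Module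

section Descent

variable {k L V : Type*} [Field k] [Field L] [Algebra k L] [AddCommGroup V] [Module L V]
  [Module k V] [IsScalarTower k L V] {θ : L →+* L}

theorem LinearIndependent.extendScalars_of_map_eq_self
    (hθ : ∀ μ, θ μ = μ → μ ∈ Set.range (algebraMap k L)) (H : V →ₛₗ[θ] V) {ι : Type*}
    {v : ι → V} (hv : ∀ i, H (v i) = v i) (hk : LinearIndependent k v) :
    LinearIndependent L v := by
  classical
  rw [linearIndependent_iff']
  intro S
  induction S using Finset.strongInduction with
  | H S IH =>
  intro g hg i₀ hi₀
  by_contra hne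
  set g' : ι → L := fun i => (g i₀)⁻¹ * g i
  have hg'i₀ : g' i₀ = 1 := inv_mul_cancel₀ hne
  have h1 : ∑ i ∈ S, g' i • v i = 0 := by
    simp only [g', mul_smul, ← smul_sum, hg, smul_zero]
  -- applying `H` and subtracting kills the `i₀` term
  have h2 : ∑ i ∈ S.erase i₀, (θ (g' i) - g' i) • v i = 0 := by
    have hH : ∑ i ∈ S, θ (g' i) • v i = 0 := by
      simpa only [map_sum, LinearMap.map_smulₛₗ, hv, map_zero] using congrArg H h1
    rw [sum_erase (f := fun i => (θ (g' i) - g' i) • v i) _ (by simp [hg'i₀])]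
    simp only [sub_smul, sum_sub_distrib, hH, h1, sub_zero]
  have h3 : ∀ i ∈ S, θ (g' i) = g' i := fun i hi => by
    rcases eq_or_ne i i₀ with rfl | hi'
    · rw [hg'i₀, map_one]
    · exact sub_eq_zero.mp <| IH _ (erase_ssubset hi₀) _ h2 i (mem_erase.mpr ⟨hi', hi⟩)
  choose! c hc using fun i hi => hθ _ (h3 i hi)
  have h4 : ∑ i ∈ S, c i • v i = 0 := by
    rw [← h1]
    exact sum_congr rfl fun i hi => by rw [← hc i hi, algebraMap_smul]
  have := linearIndependent_iff'.mp hk S c h4 i₀ hi₀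
  rw [← hc i₀ hi₀, this, map_zero] at hg'i₀
  exact zero_ne_one hg'i₀

theorem finrank_le_finrank_of_forall_map_eq_self
    (hθ : ∀ μ, θ μ = μ → μ ∈ Set.range (algebraMap k L)) (H : V →ₛₗ[θ] V)
    (K : Submodule k V) [Module.Finite k K] (W : Submodule L V) [Module.Finite L W]
    (hKW : ∀ x ∈ K, x ∈ W) (hK : ∀ x ∈ K, H x = x) : finrank k K ≤ finrank L W := by
  set b := Module.finBasis k K
  have hv : LinearIndependent L fun i => (b i : V) :=
    (b.linearIndependent.map' K.subtype K.ker_subtype).extendScalars_of_map_eq_self hθ H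
      fun i => hK _ (b i).2
  have hw : LinearIndependent L fun i => (⟨b i, hKW _ (b i).2⟩ : W) :=
    LinearIndependent.of_comp W.subtype hv
  simpa using hw.fintype_card_le_finrank

end Descent

namespace LinearMap

variable {L V : Type*} [Semiring L] [AddCommMonoid V] [Module L V] {θ : L →+* L}

theorem iterate_map_smulₛₗ_s8 (H : V →ₛₗ[θ] V) (m : ℕ) (μ : L) (x : V) :
    H^[m] (μ • x) = θ^[m] μ • H^[m] x := by
  induction m generalizing μ x with
  | zero => rfl
  | succ m ih => simp only [Function.iterate_succ_apply, map_smulₛₗ, ih]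

def iterateFixedSubmodule (H : V →ₛₗ[θ] V) (m : ℕ) (hθ : ∀ μ, θ^[m] μ = μ) :
    Submodule L V where
  carrier := {x | H^[m] x = x}
  add_mem' hx hy := by simp_all [iterate_map_add]
  zero_mem' := iterate_map_zero H m
  smul_mem' μ x hx := by simp_all [iterate_map_smulₛₗ_s8]

end LinearMap

theorem Finset.exists_sum_range_succ_eq_add_shift {R : Type*} [CommSemiring R] (α β : ℕ → R)
    (m : ℕ) : ∃ γ : ℕ → R, ∀ T : ℕ → R,
      ∑ k ∈ range (m + 1), (α k * T k + β k * T (k + 1)) = ∑ k ∈ range (m + 2), γ k * T k := by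
  refine ⟨fun j => (if j ≤ m then α j else 0) + (if j = 0 then 0 else β (j - 1)), fun T => ?_⟩
  simp only [add_mul, sum_add_distrib]
  congr 1
  · rw [sum_range_succ _ (m + 1)]
    simp only [show ¬ m + 1 ≤ m by omega, if_false, zero_mul, add_zero]
    exact sum_congr rfl fun k hk => by rw [if_pos (Nat.lt_succ_iff.mp (mem_range.mp hk))]
  · rw [sum_range_succ' _ (m + 1)]
    simp

theorem RingHom.exists_iterate_eq_sum {R : Type*} [CommSemiring R] (ψ : R →+* R) (a b : R)
    (u w m : ℕ) : ∃ c : ℕ → R, ∀ x, (fun y => a * (ψ ^ u) y + b * (ψ ^ (u + w)) y)^[m] x =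
      ∑ k ∈ Finset.range (m + 1), c k * (ψ ^ (m * u + k * w)) x := by
  induction m with
  | zero => exact ⟨fun _ => 1, fun x => by simp⟩
  | succ m ih =>
    obtain ⟨c, hc⟩ := ih
    obtain ⟨γ, hγ⟩ := exists_sum_range_succ_eq_add_shift
      (fun k => a * (ψ ^ u) (c k)) (fun k => b * (ψ ^ (u + w)) (c k)) m
    refine ⟨γ, fun x => ?_⟩
    have hcomp : ∀ e f, (ψ ^ e) ((ψ ^ f) x) = (ψ ^ (e + f)) x := fun e f => by
      simp only [RingHom.coe_pow, Function.iterate_add_apply]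
    rw [Function.iterate_succ_apply', hc, ← hγ, map_sum, map_sum, mul_sum, mul_sum,
      ← sum_add_distrib]
    refine sum_congr rfl fun k _ => ?_
    simp only [map_mul, hcomp]
    ring_nf

theorem ncard_setOf_sum_mul_pow_eq_self_le {K ι : Type*} [Field K] (J : Finset ι) (c : ι → K)
    (N : ι → ℕ) {M : ℕ} (hM : 1 ≤ M) (hN : ∀ i ∈ J, 1 < N i ∧ N i ≤ M) :
    {x : K | ∑ i ∈ J, c i * x ^ N i = x}.ncard ≤ M := by
  classical
  set P : K[X] := ∑ i ∈ J, C (c i) * X ^ N i - X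
  have hP : P ≠ 0 := fun h => by
    have h1 : P.coeff 1 = -1 := by
      simp only [P, coeff_sub, finsetSum_coeff, coeff_C_mul_X_pow, coeff_X_one]
      rw [sum_eq_zero fun i hi => if_neg (hN i hi).1.ne, zero_sub]
    simp [h] at h1
  have hdeg : P.natDegree ≤ M := by
    refine (natDegree_sub_le _ _).trans (max_le ?_ (natDegree_X_le.trans hM))
    refine natDegree_sum_le_of_forall_le _ _ fun i hi => ?_
    exact (natDegree_C_mul_le _ _).trans ((natDegree_X_pow_le _).trans (hN i hi).2)
  have hsub : {x : K | ∑ i ∈ J, c i * x ^ N i = x} ⊆ P.roots.toFinset := fun x hx => by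
    simpa [P, hP, eval_finsetSum, sub_eq_zero] using hx
  calc _ ≤ (P.roots.toFinset : Set K).ncard := Set.ncard_le_ncard hsub
    _ = P.roots.toFinset.card := Set.ncard_coe_finset _
    _ ≤ P.natDegree := card_le_degree_of_subset_roots fun x hx => Multiset.mem_toFinset.mp hx
    _ ≤ M := hdeg

theorem add_mul_mod_le_min {n t s ℓ k : ℕ} (ht : 0 < t) (hℓt : ℓ ≤ t - 1)
    (hts : t ≤ n * ℓ + s) (hk : k ≤ n) : (s + k * ℓ) % t ≤ min (t - 1) ((n - 1) * ℓ + s) := by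
  have hkℓ : k * ℓ ≤ n * ℓ := Nat.mul_le_mul_right ℓ hk
  have hnℓ : (n - 1) * ℓ = n * ℓ - ℓ := Nat.sub_one_mul n ℓ
  refine le_min (Nat.le_sub_one_of_lt (Nat.mod_lt _ ht)) ?_
  rcases Nat.lt_or_ge (s + k * ℓ) t with hlt | hge
  · have hkn : k < n := Nat.lt_of_mul_lt_mul_right (a := ℓ) (by omega)
    have : k * ℓ ≤ (n - 1) * ℓ := Nat.mul_le_mul_right ℓ (by omega)
    rw [Nat.mod_eq_of_lt hlt]
    omega
  · have : (s + k * ℓ) % t ≤ s + k * ℓ - t := Nat.mod_eq_sub_mod hge ▸ Nat.mod_le _ _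
    omega

theorem FiniteField.pow_pow_eq_pow_pow_mod {K : Type*} [Field K] [Fintype K] {Q t : ℕ}
    (hK : Fintype.card K = Q ^ t) (x : K) (m : ℕ) : x ^ Q ^ m = x ^ Q ^ (m % t) := by
  conv_lhs => rw [← Nat.div_add_mod m t, pow_add, pow_mul x, pow_mul Q, ← hK,
    FiniteField.pow_card_pow]

theorem FiniteField.mem_range_algebraMap_of_frobeniusAlgHom_pow_apply_eq_self {K L : Type*}
    [Field K] [Fintype K] [Field L] [Finite L] [Algebra K L] {s : ℕ}
    (hs : s.Coprime (finrank K L)) {x : L} (hx : (frobeniusAlgHom K L ^ s) x = x) :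
    x ∈ Set.range (algebraMap K L) := by
  rw [IsGalois.mem_range_algebraMap_iff_fixed]
  intro g
  obtain ⟨u, hu⟩ := exists_pow_eq_self_of_coprime (x := frobeniusAlgHom K L)
    (orderOf_frobeniusAlgHom K L ▸ hs)
  have hφ : frobeniusAlgHom K L x = x := by
    rw [← hu, AlgHom.coe_pow, Function.iterate_fixed hx]
  obtain ⟨j, hj⟩ := (bijective_frobeniusAlgHom_pow K L).2 g
  change (g : L →ₐ[K] L) x = x
  rw [← hj, AlgHom.coe_pow, Function.iterate_fixed hφ]

namespace FiniteField

variable (K : Type*) [Field K] [Fintype K]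

theorem frobeniusAlgHom_pow_apply (R : Type*) [CommRing R] [Algebra K R] (e : ℕ) (x : R) :
    (frobeniusAlgHom K R ^ e) x = x ^ Fintype.card K ^ e := by
  rw [AlgHom.coe_pow, coe_frobeniusAlgHom, pow_iterate]

variable (L F : Type*) [Field L] [Finite L] [Algebra K L] [CommRing F] [Algebra K F] [Algebra L F]

theorem frobeniusAlgHom_pow_add_mul_finrank (u j : ℕ) :
    frobeniusAlgHom K L ^ (u + j * finrank K L) = frobeniusAlgHom K L ^ u := by
  rw [pow_add, mul_comm, pow_mul, ← orderOf_frobeniusAlgHom, pow_orderOf_eq_one, one_pow,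
    mul_one]

theorem iterate_frobeniusAlgHom_pow_finrank (u : ℕ) (μ : L) :
    (⇑(frobeniusAlgHom K L ^ u))^[finrank K L] μ = μ := by
  rw [← AlgHom.coe_pow, ← pow_mul, ← zero_add (_ * _), frobeniusAlgHom_pow_add_mul_finrank,
    pow_zero, AlgHom.one_apply]

/-- `x ↦ a x^{q^u} + b x^{q^{u + j n}}`, where `q = #K` and `q^n = #L`. -/
noncomputable def frobeniusBinomial (a b : F) (u j : ℕ) :
    F →ₛₗ[(frobeniusAlgHom K L ^ u).toRingHom] F where
  toFun x := a * x ^ Fintype.card K ^ u + b * x ^ Fintype.card K ^ (u + j * finrank K L)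
  map_add' x y := by simp only [← frobeniusAlgHom_pow_apply, map_add]; ring
  map_smul' μ x := by
    have hμ := congrArg (algebraMap L F) (congrFun (congrArg DFunLike.coe
      (frobeniusAlgHom_pow_add_mul_finrank K L u j)) μ)
    simp only [frobeniusAlgHom_pow_apply, map_pow] at hμ
    simp only [Algebra.smul_def, mul_pow, hμ, AlgHom.toRingHom_eq_coe, RingHom.coe_coe,
      frobeniusAlgHom_pow_apply, map_pow]
    ring

@[simp]
theorem frobeniusBinomial_apply (a b : F) (u j : ℕ) (x : F) :
    frobeniusBinomial K L F a b u j x =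
      a * x ^ Fintype.card K ^ u + b * x ^ Fintype.card K ^ (u + j * finrank K L) :=
  rfl

end FiniteField

theorem FiniteField.finrank_iterateFixedSubmodule_frobeniusBinomial_le {K L F : Type*} [Field K]
    [Fintype K] [Field L] [Fintype L] [Algebra K L] [Field F] [Fintype F] [Algebra K F]
    [Algebra L F] (a b : F) (u j : ℕ) {t D : ℕ} (hF : Fintype.card F = Fintype.card L ^ t)
    (hD : ∀ k ≤ finrank K L, 0 < (u + k * j) % t ∧ (u + k * j) % t ≤ D) :
    finrank L ((frobeniusBinomial K L F a b u j).iterateFixedSubmodule (finrank K L)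
      (iterate_frobeniusAlgHom_pow_finrank K L u)) ≤ D := by
  classical
  set n := finrank K L
  set W := (frobeniusBinomial K L F a b u j).iterateFixedSubmodule n
    (iterate_frobeniusAlgHom_pow_finrank K L u)
  set Q := Fintype.card L
  have hQ : 1 < Q := Fintype.one_lt_card
  have hKL : Fintype.card K ^ n = Q := Module.card_eq_pow_finrank.symm
  set ψ := (frobeniusAlgHom K F).toRingHom
  have hψ : ∀ e x, (ψ ^ e) x = x ^ Fintype.card K ^ e := fun e x => by
    rw [RingHom.coe_pow]; exact congrFun (pow_iterate _ e) x
  obtain ⟨c, hc⟩ := RingHom.exists_iterate_eq_sum ψ a b u (j * n) n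
  have hroot : (W : Set F) ⊆ {x | ∑ k ∈ range (n + 1), c k * x ^ Q ^ ((u + k * j) % t) = x} := by
    intro x hx
    have hH : ⇑(frobeniusBinomial K L F a b u j) =
        fun y => a * (ψ ^ u) y + b * (ψ ^ (u + j * n)) y := by
      funext y; simp only [hψ]; rfl
    change (frobeniusBinomial K L F a b u j)^[n] x = x at hx
    rw [hH, hc] at hx
    refine Eq.trans (sum_congr rfl fun k _ => ?_) hx
    rw [hψ, ← pow_pow_eq_pow_pow_mod hF, ← hKL, ← pow_mul]
    ring_nf
  have hcard : Q ^ finrank L W ≤ Q ^ D := calc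
    Q ^ finrank L W = Nat.card W := by
      rw [Nat.card_eq_fintype_card, Module.card_eq_pow_finrank (K := L) (V := W)]
    _ = (W : Set F).ncard := Nat.card_coe_set_eq _
    _ ≤ _ := Set.ncard_le_ncard hroot
    _ ≤ Q ^ D := ncard_setOf_sum_mul_pow_eq_self_le _ _ _ (Nat.one_le_pow _ _ (by omega))
      fun k hk => have hk := hD k (by simpa [Nat.lt_succ_iff] using hk)
        ⟨Nat.one_lt_pow hk.1.ne' hQ, Nat.pow_le_pow_right hQ.le hk.2⟩
  exact (Nat.pow_le_pow_iff_right hQ).mp hcard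

theorem stmt_8_general (q n t s ℓ : ℕ) (Fq Fqn F : Type*) [Field Fq] [Field Fqn] [Field F]
    [Algebra Fq Fqn] [Algebra Fqn F] [Algebra Fq F] [IsScalarTower Fq Fqn F]
    [Fintype Fq] [Fintype Fqn] [Fintype F]
    (hq : Fintype.card Fq = q) (hqn : Fintype.card Fqn = q ^ n)
    (hF : Fintype.card F = q ^ (n * t))
    (hs : Nat.gcd s n = 1)
    (a b : F)
    (hℓt : ℓ ≤ t - 1)
    (hts : t ≤ n * ℓ + s)
    (hcong : ∀ h : ℕ, h ≤ n → ¬ (t ∣ (s + h * ℓ)))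
    (f : F →ₗ[Fq] F)
    (hf : ∀ x, f x = -x + a * x ^ q ^ s + b * x ^ q ^ (s + ℓ * n)) :
    Module.finrank Fq (LinearMap.ker f) ≤ min (t - 1) ((n - 1) * ℓ + s) := by
  subst hq
  have hrank : finrank Fq Fqn = n :=
    Nat.pow_right_injective Fintype.one_lt_card (Module.card_eq_pow_finrank.symm.trans hqn)
  have ht : 0 < t := Nat.pos_of_ne_zero fun h => by
    simpa [h, hF] using Fintype.one_lt_card (α := F)
  subst hrank
  set H := FiniteField.frobeniusBinomial Fq Fqn F a b s ℓ
  have hfix : ∀ x ∈ LinearMap.ker f, H x = x := fun x hx => by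
    have := hf x
    rw [LinearMap.mem_ker.mp hx] at this
    rw [FiniteField.frobeniusBinomial_apply]
    linear_combination -this
  calc finrank Fq (LinearMap.ker f)
      ≤ finrank Fqn (H.iterateFixedSubmodule _
          (FiniteField.iterate_frobeniusAlgHom_pow_finrank Fq Fqn s)) :=
        finrank_le_finrank_of_forall_map_eq_self
          (fun _ => FiniteField.mem_range_algebraMap_of_frobeniusAlgHom_pow_apply_eq_self hs) H
          _ _ (fun x hx => Function.iterate_fixed (hfix x hx) _) hfix
    _ ≤ _ := FiniteField.finrank_iterateFixedSubmodule_frobeniusBinomial_le a b s ℓ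
        (by rw [hF, hqn, pow_mul]) fun k hk =>
          ⟨Nat.pos_of_ne_zero fun h => hcong k hk (Nat.dvd_of_mod_eq_zero h),
            add_mul_mod_le_min ht hℓt hts hk⟩

theorem stmt_8 (q n t s ℓ : ℕ) (Fq Fqn F : Type*) [Field Fq] [Field Fqn] [Field F]
    [Algebra Fq Fqn] [Algebra Fqn F] [Algebra Fq F] [IsScalarTower Fq Fqn F]
    [Fintype Fq] [Fintype Fqn] [Fintype F]
    (hq : Fintype.card Fq = q) (hqn : Fintype.card Fqn = q ^ n)
    (hF : Fintype.card F = q ^ (n * t))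
    (hs : Nat.gcd s n = 1)
    (a b : F) (ha : a ≠ 0) (hb : b ≠ 0)
    (hℓ1 : 1 ≤ ℓ) (hℓt : ℓ ≤ t - 1)
    (hts : t ≤ n * ℓ + s)
    (hcong : ∀ h : ℕ, h ≤ n → ¬ (t ∣ (s + h * ℓ)))
    (f : F →ₗ[Fq] F)
    (hf : ∀ x, f x = -x + a * x ^ q ^ s + b * x ^ q ^ (s + ℓ * n)) :
    Module.finrank Fq (LinearMap.ker f) ≤ min (t - 1) ((n - 1) * ℓ + s) :=
  stmt_8_general q n t s ℓ Fq Fqn F hq hqn hF hs a b hℓt hts hcong f hf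
end

section
/- Let f(x) = -x + b₀x^{q³} + b₁x^q ∈ F_{q⁴}[x] with b₀,b₁ ≠ 0. Then dim_{F_q} ker f = 2 if and only if b₀^{1+q} + b₁^{q²+q} = 0 and b₁b₀^q + b₀^{q²}b₁^q = 1. -/
/-!
Write `f = g - id` with `g x = b₀ x^{q³} + b₁ x^q`, so that `ker f` is the space of fixed points
of `g`. Over `K = 𝔽_{q²}` the map `g` is semilinear for `c ↦ c^q`, so fixed vectors that are
independent over `𝔽_q` remain independent over `K` (a fixed `v = c u` forces `c^q = c`). As `F` is
a plane over `K`, this bounds `dim ker f ≤ 2`, and two independent fixed vectors form a `K`-basis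
on which `g ∘ g` acts as `c ↦ c^{q²} = c`, so `g` is an involution. Conversely, for an involution
every `x` is recovered from the fixed vectors `x + g x` and `c x + c^q g x`, `c ∈ K \ 𝔽_q`.
Finally `g ∘ g = A · id + B · Frob²`, so `g` is an involution iff `A = 1` and `B = 0`, and
applying Frobenius turns these into the stated conditions.
-/

open Module IntermediateField FiniteField

theorem Submodule.exists_linearIndependent_pair {K V : Type*} [DivisionRing K] [AddCommGroup V]
    [Module K V] {W : Submodule K V} (h : 2 ≤ finrank K W) :
    ∃ u ∈ W, ∃ v ∈ W, LinearIndependent K ![u, v] := by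
  obtain ⟨e, he⟩ := exists_linearIndependent_of_le_finrank h
  refine ⟨e 0, (e 0).2, e 1, (e 1).2, ?_⟩
  have := he.map' W.subtype W.ker_subtype
  rwa [show W.subtype ∘ e = ![(e 0 : V), e 1] by ext i; fin_cases i <;> rfl] at this

theorem LinearIndependent.exists_smul_add_smul_eq {K V : Type*} [Field K] [AddCommGroup V]
    [Module K V] {u v : V} (huv : LinearIndependent K ![u, v]) (hV : finrank K V = 2) (x : V) :
    ∃ a b : K, a • u + b • v = x := by
  have : FiniteDimensional K V := .of_finrank_pos (by omega)
  have hspan := huv.span_eq_top_of_card_eq_finrank' (by simp [hV])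
  rw [Matrix.range_cons, Matrix.range_cons, Matrix.range_empty, Set.union_empty,
    Set.singleton_union] at hspan
  exact Submodule.mem_span_pair.1 (hspan ▸ Submodule.mem_top)

theorem finrank_span_pair_le_two {K V : Type*} [Field K] [AddCommGroup V] [Module K V]
    (u v : V) : finrank K (Submodule.span K {u, v}) ≤ 2 := by
  classical
  exact (finrank_span_le_card _).trans (by simpa using Finset.card_le_two)

theorem LinearMap.mem_ker_sub_id {K V : Type*} [Ring K] [AddCommGroup V] [Module K V]
    {g : V →ₗ[K] V} {x : V} : x ∈ LinearMap.ker (g - LinearMap.id) ↔ g x = x := by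
  rw [mem_ker, sub_apply, id_apply, sub_eq_zero]

namespace FiniteField

variable {Fq F : Type*} [Field Fq] [Fintype Fq] [Field F] [Algebra Fq F]

local notation "q" => Fintype.card Fq

theorem add_pow_card_pow_s14 (n : ℕ) (x y : F) : (x + y) ^ q ^ n = x ^ q ^ n + y ^ q ^ n := by
  simpa [AlgHom.coe_pow, coe_frobeniusAlgHom, pow_iterate] using
    map_add (frobeniusAlgHom Fq F ^ n) x y

theorem add_pow_card (x y : F) : (x + y) ^ q = x ^ q + y ^ q := by
  simpa using add_pow_card_pow_s14 (Fq := Fq) 1 x y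

variable [Fintype F]

theorem pow_card_pow_four (hF : finrank Fq F = 4) (x : F) : x ^ q ^ 4 = x := by
  rw [← hF, ← Module.card_eq_pow_finrank, FiniteField.pow_card]

theorem pow_card_eq_self_iff_mem_range (x : F) :
    x ^ q = x ↔ x ∈ Set.range (algebraMap Fq F) := by
  rw [IsGalois.mem_range_algebraMap_iff_fixed]
  refine ⟨fun hx σ ↦ ?_, fun h ↦ h (frobeniusAlgEquivOfAlgebraic Fq F)⟩
  obtain ⟨n, rfl⟩ := (bijective_frobeniusAlgEquivOfAlgebraic_pow Fq F).2 σ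
  simp only [AlgEquiv.coe_pow]
  exact Function.iterate_fixed hx n

variable (Fq F) in
/-- The subfield `𝔽_{q^n}` of `F`. -/
noncomputable def frobeniusFixedField (n : ℕ) : IntermediateField Fq F :=
  fixedField (Subgroup.zpowers (frobeniusAlgEquivOfAlgebraic Fq F ^ n))

theorem mem_frobeniusFixedField {n : ℕ} {x : F} :
    x ∈ frobeniusFixedField Fq F n ↔ x ^ q ^ n = x := by
  have hpow : ∀ y : F, (frobeniusAlgEquivOfAlgebraic Fq F ^ n) y = y ^ q ^ n := fun y ↦ by
    rw [AlgEquiv.coe_pow, coe_frobeniusAlgEquivOfAlgebraic_iterate]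
  rw [frobeniusFixedField, mem_fixedField_iff, ← hpow]
  refine ⟨fun h ↦ h _ (Subgroup.mem_zpowers _), fun hx σ hσ ↦ ?_⟩
  obtain ⟨k, rfl⟩ := mem_powers_iff_mem_zpowers.mpr hσ
  rw [AlgEquiv.coe_pow]
  exact Function.iterate_fixed hx k

theorem finrank_frobeniusFixedField {n : ℕ} (hn : n ≠ 0) (hdvd : n ∣ finrank Fq F) :
    finrank (frobeniusFixedField Fq F n) F = finrank Fq F / n := by
  rw [frobeniusFixedField, finrank_fixedField_eq_card, Nat.card_zpowers,
    orderOf_pow_of_dvd hn (by rwa [orderOf_frobeniusAlgEquivOfAlgebraic]),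
    orderOf_frobeniusAlgEquivOfAlgebraic]

section QuarticExtension

local notation "𝕂" => frobeniusFixedField Fq F 2

theorem finrank_frobeniusFixedField_two (hF : finrank Fq F = 4) : finrank 𝕂 F = 2 := by
  rw [finrank_frobeniusFixedField two_ne_zero (by rw [hF]; norm_num), hF]

theorem frobeniusFixedField_two_ne_bot (hF : finrank Fq F = 4) : 𝕂 ≠ ⊥ := by
  rw [ne_eq, ← IntermediateField.finrank_eq_one_iff]
  have := finrank_mul_finrank Fq 𝕂 F
  rw [finrank_frobeniusFixedField_two hF, hF] at this
  omega

theorem frobeniusFixedField_two_ne_top (hF : finrank Fq F = 4) : 𝕂 ≠ ⊤ := by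
  rw [ne_eq, ← finrank_eq_one_iff_eq_top, finrank_frobeniusFixedField_two hF]
  norm_num

theorem exists_mem_frobeniusFixedField_two_pow_card_ne (hF : finrank Fq F = 4) :
    ∃ c ∈ 𝕂, c ^ q ≠ c := by
  obtain ⟨c, hc, hc'⟩ :=
    SetLike.exists_of_lt (bot_lt_iff_ne_bot.2 (frobeniusFixedField_two_ne_bot hF))
  exact ⟨c, hc, fun h ↦ hc' (mem_bot.2 ((pow_card_eq_self_iff_mem_range c).1 h))⟩

theorem pow_card_pow_card_of_frobeniusFixedField_two (c : 𝕂) : (c ^ q) ^ q = c :=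
  Subtype.ext <| by
    simp only [IntermediateField.coe_pow, ← pow_mul, ← sq, mem_frobeniusFixedField.1 c.2]

def IsFrobeniusSemilinear (K : IntermediateField Fq F) (g : F →ₗ[Fq] F) : Prop :=
  ∀ c ∈ K, ∀ x, g (c * x) = c ^ q * g x

theorem IsFrobeniusSemilinear.linearIndependent_of_fixed {K : IntermediateField Fq F}
    {g : F →ₗ[Fq] F} (hg : IsFrobeniusSemilinear K g) {u v : F} (hu : g u = u) (hv : g v = v)
    (huv : LinearIndependent Fq ![u, v]) : LinearIndependent K ![u, v] := by
  have hu0 : u ≠ 0 := huv.ne_zero 0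
  rw [LinearIndependent.pair_iff' hu0] at huv ⊢
  rintro c rfl
  have hc : (c : F) ^ q = c := by
    have h : g (c * u) = c * u := hv
    rw [hg c c.2, hu] at h
    exact mul_right_cancel₀ hu0 h
  obtain ⟨a, ha⟩ := (pow_card_eq_self_iff_mem_range _).1 hc
  exact huv a (by rw [Algebra.smul_def, ha]; rfl)

variable {g : F →ₗ[Fq] F}

theorem IsFrobeniusSemilinear.apply_smul_add_smul (hg : IsFrobeniusSemilinear 𝕂 g) {u v : F}
    (hu : g u = u) (hv : g v = v) (a b : 𝕂) : g (a • u + b • v) = a ^ q • u + b ^ q • v := by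
  simp only [smul_def, IntermediateField.coe_pow, smul_eq_mul]
  rw [map_add, hg _ a.2, hg _ b.2, hu, hv]

theorem IsFrobeniusSemilinear.involutive_of_two_le_finrank (hF : finrank Fq F = 4)
    (hg : IsFrobeniusSemilinear 𝕂 g) (h : 2 ≤ finrank Fq (LinearMap.ker (g - LinearMap.id))) :
    Function.Involutive g := by
  obtain ⟨u, hu, v, hv, huv⟩ := Submodule.exists_linearIndependent_pair h
  rw [LinearMap.mem_ker_sub_id] at hu hv
  intro x
  obtain ⟨a, b, rfl⟩ := (hg.linearIndependent_of_fixed hu hv huv).exists_smul_add_smul_eq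
    (finrank_frobeniusFixedField_two hF) x
  rw [hg.apply_smul_add_smul hu hv, hg.apply_smul_add_smul hu hv,
    pow_card_pow_card_of_frobeniusFixedField_two, pow_card_pow_card_of_frobeniusFixedField_two]

theorem IsFrobeniusSemilinear.finrank_le_two (hF : finrank Fq F = 4)
    (hg : IsFrobeniusSemilinear 𝕂 g) : finrank Fq (LinearMap.ker (g - LinearMap.id)) ≤ 2 := by
  by_contra! h
  obtain ⟨u, hu, v, hv, huv⟩ := Submodule.exists_linearIndependent_pair h.le
  rw [LinearMap.mem_ker_sub_id] at hu hv
  have huvK := hg.linearIndependent_of_fixed hu hv huv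
  have hle : LinearMap.ker (g - LinearMap.id) ≤ Submodule.span Fq {u, v} := by
    intro w hw
    rw [LinearMap.mem_ker_sub_id] at hw
    obtain ⟨a, b, rfl⟩ := huvK.exists_smul_add_smul_eq (finrank_frobeniusFixedField_two hF) w
    rw [hg.apply_smul_add_smul hu hv] at hw
    obtain ⟨ha, hb⟩ := huvK.eq_of_pair hw
    obtain ⟨a', ha'⟩ :=
      (pow_card_eq_self_iff_mem_range (a : F)).1 (by simpa using congrArg Subtype.val ha)
    obtain ⟨b', hb'⟩ :=
      (pow_card_eq_self_iff_mem_range (b : F)).1 (by simpa using congrArg Subtype.val hb)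
    refine Submodule.mem_span_pair.2 ⟨a', b', ?_⟩
    rw [Algebra.smul_def, Algebra.smul_def, ha', hb']
    rfl
  have := (Submodule.finrank_mono hle).trans (finrank_span_pair_le_two u v)
  omega

theorem IsFrobeniusSemilinear.two_le_finrank_of_involutive (hF : finrank Fq F = 4)
    (hg : IsFrobeniusSemilinear 𝕂 g) (hinv : Function.Involutive g) :
    2 ≤ finrank Fq (LinearMap.ker (g - LinearMap.id)) := by
  set W := LinearMap.ker (g - LinearMap.id)
  obtain ⟨c, hc, hcq⟩ := exists_mem_frobeniusFixedField_two_pow_card_ne hF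
  have hcqq : (c ^ q) ^ q = c := by rw [← pow_mul, ← sq, mem_frobeniusFixedField.1 hc]
  have hsurj : Function.Surjective fun w : W × W ↦
      (c ^ q - c)⁻¹ * (c ^ q * (w.1 : F) - (w.2 : F)) := by
    intro x
    refine ⟨(⟨x + g x, ?_⟩, ⟨c * x + c ^ q * g x, ?_⟩), ?_⟩
    · rw [LinearMap.mem_ker_sub_id, map_add, hinv x, add_comm]
    · rw [LinearMap.mem_ker_sub_id, map_add, hg c hc, hg _ (pow_mem hc q), hinv x, hcqq,
        add_comm]
    · field_simp [sub_ne_zero.2 hcq]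
      ring
  have hcard := Nat.card_le_card_of_surjective _ hsurj
  rw [Nat.card_prod, natCard_eq_pow_finrank (K := Fq) (V := F),
    natCard_eq_pow_finrank (K := Fq) (V := W), hF, ← pow_add, Nat.card_eq_fintype_card] at hcard
  have := (Nat.pow_le_pow_iff_right Fintype.one_lt_card).1 hcard
  omega

theorem IsFrobeniusSemilinear.finrank_eq_two_iff (hF : finrank Fq F = 4)
    (hg : IsFrobeniusSemilinear 𝕂 g) :
    finrank Fq (LinearMap.ker (g - LinearMap.id)) = 2 ↔ Function.Involutive g :=
  ⟨fun h ↦ hg.involutive_of_two_le_finrank hF h.ge,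
    fun h ↦ (hg.finrank_le_two hF).antisymm (hg.two_le_finrank_of_involutive hF h)⟩

theorem forall_mul_add_mul_pow_eq_self_iff {n : ℕ} (hn : frobeniusFixedField Fq F n ≠ ⊤)
    (A B : F) : (∀ x, A * x + B * x ^ q ^ n = x) ↔ A = 1 ∧ B = 0 := by
  refine ⟨fun h ↦ ?_, fun ⟨hA, hB⟩ x ↦ by rw [hA, hB]; ring⟩
  obtain ⟨y, hy⟩ := SetLike.exists_not_mem_of_ne_top _ hn
  rw [mem_frobeniusFixedField] at hy
  have h1 : A + B = 1 := by simpa using h 1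
  have hB : B = 0 := by
    have : B * (y ^ q ^ n - y) = 0 := by linear_combination h y - y * h1
    exact (mul_eq_zero.1 this).resolve_right (sub_ne_zero.2 hy)
  exact ⟨by simpa [hB] using h1, hB⟩

variable (Fq) in
def frobPoly (b0 b1 x : F) : F :=
  b0 * x ^ q ^ 3 + b1 * x ^ q

theorem isFrobeniusSemilinear_frobPoly {b0 b1 : F}
    (hg : ⇑g = frobPoly Fq b0 b1) : IsFrobeniusSemilinear 𝕂 g := by
  intro c hc x
  have hc3 : c ^ q ^ 3 = c ^ q := by rw [pow_succ, pow_mul, mem_frobeniusFixedField.1 hc]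
  simp only [hg, frobPoly, mul_pow, hc3]
  ring

theorem frobPoly_frobPoly (hF : finrank Fq F = 4) (b0 b1 x : F) :
    frobPoly Fq b0 b1 (frobPoly Fq b0 b1 x) =
      (b0 * b1 ^ q ^ 3 + b1 * b0 ^ q) * x + (b0 * b0 ^ q ^ 3 + b1 * b1 ^ q) * x ^ q ^ 2 := by
  have h4 := pow_card_pow_four hF x
  have e13 : (x ^ q) ^ q ^ 3 = x := by rw [← pow_mul, ← pow_succ', h4]
  have e31 : (x ^ q ^ 3) ^ q = x := by rw [← pow_mul, ← pow_succ, h4]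
  have e33 : (x ^ q ^ 3) ^ q ^ 3 = x ^ q ^ 2 := by
    rw [← pow_mul, show q ^ 3 * q ^ 3 = q ^ 4 * q ^ 2 by ring, pow_mul, h4]
  simp only [frobPoly, add_pow_card_pow_s14, add_pow_card, mul_pow, e13, e31, e33, ← pow_mul, ← sq]
  ring

theorem involutive_frobPoly_iff (hF : finrank Fq F = 4) (b0 b1 : F) :
    Function.Involutive (frobPoly Fq b0 b1) ↔
      b0 * b1 ^ q ^ 3 + b1 * b0 ^ q = 1 ∧ b0 * b0 ^ q ^ 3 + b1 * b1 ^ q = 0 := by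
  simp only [Function.Involutive, frobPoly_frobPoly hF]
  exact forall_mul_add_mul_pow_eq_self_iff (frobeniusFixedField_two_ne_top hF) _ _

theorem involution_equations_iff (hF : finrank Fq F = 4) {b0 b1 : F} (hb0 : b0 ≠ 0)
    (hb1 : b1 ≠ 0) :
    (b0 * b1 ^ q ^ 3 + b1 * b0 ^ q = 1 ∧ b0 * b0 ^ q ^ 3 + b1 * b1 ^ q = 0) ↔
      (b0 ^ (1 + q) + b1 ^ (q ^ 2 + q) = 0 ∧ b1 * b0 ^ q + b0 ^ q ^ 2 * b1 ^ q = 1) := by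
  have hB : (b0 * b0 ^ q ^ 3 + b1 * b1 ^ q) ^ q = b0 ^ (1 + q) + b1 ^ (q ^ 2 + q) := by
    rw [add_pow_card, mul_pow, mul_pow, ← pow_mul, ← pow_succ, pow_card_pow_four hF, ← pow_mul,
      ← sq]
    ring
  have hB0 : b0 * b0 ^ q ^ 3 + b1 * b1 ^ q = 0 ↔ b0 ^ (1 + q) + b1 ^ (q ^ 2 + q) = 0 := by
    rw [← hB, pow_eq_zero_iff Fintype.card_ne_zero]
  -- Multiply by `b₀^q b₁` and use that the `q`-th power of the first condition also vanishes.
  have hcross : b0 ^ (1 + q) + b1 ^ (q ^ 2 + q) = 0 → b0 * b1 ^ q ^ 3 = b0 ^ q ^ 2 * b1 ^ q := by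
    intro h
    have hq : (b0 ^ (1 + q) + b1 ^ (q ^ 2 + q)) ^ q = 0 := by
      rw [h, zero_pow Fintype.card_ne_zero]
    rw [add_pow_card, ← pow_mul, ← pow_mul] at hq
    apply mul_left_cancel₀ (mul_ne_zero (pow_ne_zero q hb0) hb1)
    linear_combination (b1 * b1 ^ q ^ 3) * h - b1 * b1 ^ q * hq
  constructor
  · rintro ⟨hA, h0⟩
    have h := hB0.1 h0
    exact ⟨h, by linear_combination hA - hcross h⟩
  · rintro ⟨h, hA⟩
    exact ⟨by linear_combination hA + hcross h, hB0.2 h⟩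

end QuarticExtension

end FiniteField

theorem stmt_14 (q : ℕ) (Fq F : Type*) [Field Fq] [Field F] [Algebra Fq F]
    [Fintype Fq] [Fintype F]
    (hq : Fintype.card Fq = q) (hF : Fintype.card F = q ^ 4)
    (b0 b1 : F) (hb0 : b0 ≠ 0) (hb1 : b1 ≠ 0)
    (f : F →ₗ[Fq] F)
    (hf : ∀ x, f x = -x + b0 * x ^ q ^ 3 + b1 * x ^ q) :
    Module.finrank Fq (LinearMap.ker f) = 2 ↔
      (b0 ^ (1 + q) + b1 ^ (q ^ 2 + q) = 0 ∧
        b1 * b0 ^ q + b0 ^ q ^ 2 * b1 ^ q = 1) := by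
  subst hq
  have hF4 : finrank Fq F = 4 :=
    Nat.pow_right_injective Fintype.one_lt_card (Module.card_eq_pow_finrank.symm.trans hF)
  set g : F →ₗ[Fq] F := f + LinearMap.id
  have hg : ⇑g = frobPoly Fq b0 b1 := by
    ext x
    simp only [g, LinearMap.add_apply, LinearMap.id_apply, hf, frobPoly]
    ring
  rw [show f = g - LinearMap.id by simp [g],
    (isFrobeniusSemilinear_frobPoly hg).finrank_eq_two_iff hF4, hg, involutive_frobPoly_iff hF4,
    involution_equations_iff hF4 hb0 hb1]
end

section
/- For each z ∈ F_{q⁴} with N_{q⁴/q}(z) = 1 and N_{q⁴/q²}(z) ≠ 1, there exist exactly q+1 elements b₁ ∈ F_{q⁴} such that f(x) = -x + b₀x^{q³} + b₁x^q with b₀ = zb₁ satisfies dim_{F_q} ker f = 2. -/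
/-!
Write `U = {l | l ^ (q²+1) = 1}` and `ψ(l) = (l + z^q)(1 + z l^q)`. For `x ≠ 0` put
`l = x ^ (q²-1) ∈ U`; then `x^(q³) = l^q x^q`, so `f x = 0` reads `x^(q-1) · b(1 + z l^q) = 1`,
and raising this to the power `q+1` gives `b^(q+1) ψ(l) = 1`. Conversely every such `l` comes
from exactly `q - 1` kernel elements, so `|ker f| = 1 + (q-1) · #{l ∈ U | b^(q+1) ψ(l) = 1}`,
and `dim ker f = 2` iff that set has `q + 1` elements.

Two distinct points of `U` with the same `ψ`-value force the value `v = z^q (1 - z^(q²+1))`, and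
`ψ(l) = v` is a polynomial equation of degree `q + 1` dividing `X^(q²+1) - 1`, so it has exactly
`q + 1` roots, all in `U`. Hence `dim ker f = 2` iff `b^(q+1) = v⁻¹`, and there are `q + 1` such
`b` because `v^((q²+1)(q-1)) = 1`, i.e. `v⁻¹` is a `(q+1)`-st power.
-/

open Polynomial Finset

theorem Nat.pow_four_sub_one (q : ℕ) : q ^ 4 - 1 = (q - 1) * (q + 1) * (q ^ 2 + 1) := by
  rcases q with _ | n
  · rfl
  · rw [Nat.add_sub_cancel]
    refine Nat.sub_eq_of_eq_add ?_
    ring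

namespace FiniteField

variable {F : Type*} [Field F] [Fintype F]

theorem exists_isPrimitiveRoot_of_dvd {m : ℕ} (hm : m ∣ Fintype.card F - 1) :
    ∃ ζ : F, IsPrimitiveRoot ζ m := by
  obtain ⟨g, hg⟩ := IsCyclic.exists_ofOrder_eq_natCard (α := Fˣ)
  obtain ⟨r, hr⟩ := hm
  rw [Nat.card_units, Nat.card_eq_fintype_card, hr] at hg
  refine ⟨(g : F) ^ r, ?_⟩
  refine (IsPrimitiveRoot.coe_units_iff.mpr (hg ▸ IsPrimitiveRoot.orderOf g)).pow ?_
    (mul_comm m r)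
  rw [← hr]
  exact Nat.sub_pos_of_lt Fintype.one_lt_card

variable {m r : ℕ} (hmr : m * r = Fintype.card F - 1)
include hmr

theorem exists_pow_eq_of_pow_eq_one {c : F} (hc : c ^ r = 1) : ∃ α : F, α ^ m = c := by
  have hN : NeZero (m * r) := ⟨hmr ▸ (Nat.sub_pos_of_lt Fintype.one_lt_card).ne'⟩
  obtain ⟨g, hg⟩ := exists_isPrimitiveRoot_of_dvd (F := F) (m := m * r) (by rw [hmr])
  have hc0 : c ≠ 0 := by rintro rfl; simp [zero_pow (right_ne_zero_of_mul hN.ne)] at hc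
  obtain ⟨i, -, rfl⟩ := hg.eq_pow_of_pow_eq_one (hmr ▸ pow_card_sub_one_eq_one c hc0)
  rw [← pow_mul, hg.pow_eq_one_iff_dvd,
    Nat.mul_dvd_mul_iff_right (Nat.pos_of_ne_zero (right_ne_zero_of_mul hN.ne))] at hc
  obtain ⟨j, rfl⟩ := hc
  exact ⟨g ^ j, by rw [← pow_mul, mul_comm]⟩

theorem card_nthRootsFinset_of_pow_eq_one {c : F} (hc : c ^ r = 1) :
    #(nthRootsFinset m c) = m := by
  classical
  obtain ⟨ζ, hζ⟩ := exists_isPrimitiveRoot_of_dvd (F := F) ⟨r, hmr.symm⟩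
  have hr : r ≠ 0 := right_ne_zero_of_mul (hmr ▸ (Nat.sub_pos_of_lt Fintype.one_lt_card).ne')
  have hc0 : c ≠ 0 := by rintro rfl; simp [zero_pow hr] at hc
  rw [nthRootsFinset_def, Multiset.toFinset_card_of_nodup (hζ.nthRoots_nodup hc0),
    hζ.card_nthRoots, if_pos (exists_pow_eq_of_pow_eq_one hmr hc)]

end FiniteField

theorem finrank_ker_eq_iff_card {K V W : Type*} [Field K] [Fintype K] [AddCommGroup V]
    [Module K V] [Fintype V] [AddCommGroup W] [Module K W] [DecidableEq W]
    (f : V →ₗ[K] W) (n : ℕ) :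
    Module.finrank K (LinearMap.ker f) = n ↔ #{x | f x = 0} = Fintype.card K ^ n := by
  classical
  have h : #{x | f x = 0} = Fintype.card K ^ Module.finrank K (LinearMap.ker f) := by
    rw [← Module.card_eq_pow_finrank, Fintype.card_subtype]
    simp [LinearMap.mem_ker]
  rw [h, (Nat.pow_right_injective Fintype.one_lt_card).eq_iff]

theorem linearized_eq_mul {q : ℕ} (hq : q ≠ 0) {F : Type*} [Field F] (z b x : F) :
    -x + z * b * x ^ q ^ 3 + b * x ^ q =
      x * (x ^ (q - 1) * (b * (1 + z * (x ^ (q ^ 2 - 1)) ^ q)) - 1) := by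
  have h1 : x * x ^ (q - 1) = x ^ q := by rw [← pow_succ', Nat.sub_add_cancel (by omega)]
  have h2 : (x ^ (q ^ 2 - 1)) ^ q * x ^ q = x ^ q ^ 3 := by
    rw [← mul_pow, ← pow_succ, Nat.sub_add_cancel (Nat.one_le_pow _ _ (by omega)), ← pow_mul]
    ring
  linear_combination -(z * b) * h2 - (b * (1 + z * (x ^ (q ^ 2 - 1)) ^ q)) * h1

section Frobenius

variable {K R : Type*} [Field K] [Fintype K] [CommRing R] [Algebra K R]

local notation "q" => Fintype.card K

theorem add_pow_card (a b : R) : (a + b) ^ q = a ^ q + b ^ q :=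
  map_add (FiniteField.frobeniusAlgHom K R) a b

theorem sub_pow_card (a b : R) : (a - b) ^ q = a ^ q - b ^ q :=
  map_sub (FiniteField.frobeniusAlgHom K R) a b

theorem neg_one_pow_card : (-1 : R) ^ q = -1 := by
  simpa using map_neg (FiniteField.frobeniusAlgHom K R) 1

theorem exists_linearMap_eq (a b : R) :
    ∃ f : R →ₗ[K] R, ∀ x, f x = -x + a * x ^ q ^ 3 + b * x ^ q :=
  ⟨-LinearMap.id + a • (FiniteField.frobeniusAlgHom K R ^ 3).toLinearMap +
      b • (FiniteField.frobeniusAlgHom K R).toLinearMap,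
    fun x => by simp [AlgHom.coe_pow, FiniteField.coe_frobeniusAlgHom, ← pow_mul]; ring⟩

end Frobenius

section Psi

variable {F : Type*} [Field F]

def psi (q : ℕ) (z l : F) : F := (l + z ^ q) * (1 + z * l ^ q)

noncomputable def psiPoly (q : ℕ) (z : F) : F[X] :=
  (X + C (z ^ q)) * (1 + C z * X ^ q) - C (z ^ q * (1 - z ^ (q ^ 2 + 1)))

theorem eval_psiPoly (q : ℕ) (z l : F) :
    (psiPoly q z).eval l = psi q z l - z ^ q * (1 - z ^ (q ^ 2 + 1)) := by
  simp [psiPoly, psi]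

theorem natDegree_psiPoly {q : ℕ} (hq : q ≠ 0) {z : F} (hz : z ≠ 0) :
    (psiPoly q z).natDegree = q + 1 := by
  have h1 : (1 + C z * X ^ q : F[X]).natDegree = q := by
    rw [add_comm, natDegree_add_eq_left_of_natDegree_lt] <;>
      simp [natDegree_C_mul_X_pow q z hz, Nat.pos_of_ne_zero hq]
  have h2 : (1 + C z * X ^ q : F[X]) ≠ 0 := by
    intro h; rw [h, natDegree_zero] at h1; exact hq h1.symm
  rw [psiPoly, natDegree_sub_C, natDegree_mul (X_add_C_ne_zero _) h2, natDegree_X_add_C, h1,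
    add_comm]

end Psi

section NormOne

variable {K F : Type*} [Field K] [Fintype K] [Field F] [Algebra K F]

local notation "q" => Fintype.card K

theorem psi_eq_mul_pow {z l : F} (hl : l ^ (q ^ 2 + 1) = 1) :
    psi q z l = l * (1 + z * l ^ q) ^ (q + 1) := by
  have hfrob : l * (1 + z * l ^ q) ^ q = l + z ^ q := by
    rw [add_pow_card, one_pow, mul_pow, ← pow_mul, ← sq]
    linear_combination z ^ q * hl
  rw [psi, pow_succ, ← mul_assoc, hfrob]

theorem one_add_mul_pow_ne_zero {z l : F} (hz : z ^ (q ^ 2 + 1) ≠ 1)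
    (hl : l ^ (q ^ 2 + 1) = 1) : 1 + z * l ^ q ≠ 0 := by
  intro h
  apply hz
  have h1 : (-1 : F) ^ (q ^ 2 + 1) = 1 := by
    rw [pow_succ, sq, pow_mul, neg_one_pow_card, neg_one_pow_card]
    ring
  calc z ^ (q ^ 2 + 1) = (z * l ^ q) ^ (q ^ 2 + 1) := by
        rw [mul_pow, ← pow_mul, mul_comm q, pow_mul, hl, one_pow, mul_one]
    _ = 1 := by rw [eq_neg_of_add_eq_zero_right h, h1]

theorem sub_pow_sq_mul_mul {l l' : F} (hl : l ^ (q ^ 2 + 1) = 1) (hl' : l' ^ (q ^ 2 + 1) = 1) :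
    (l - l') ^ q ^ 2 * (l * l') = -(l - l') := by
  rw [sq, pow_mul, sub_pow_card, sub_pow_card, ← pow_mul, ← pow_mul]
  rw [pow_succ, sq] at hl hl'
  linear_combination l' * hl - l * hl'

theorem psi_eq_of_psi_eq {z l l' : F} (hz : z ^ (q ^ 2 + 1) ≠ 1)
    (hl : l ^ (q ^ 2 + 1) = 1) (hl' : l' ^ (q ^ 2 + 1) = 1) (hne : l ≠ l')
    (hψ : psi q z l = psi q z l') : psi q z l = z ^ q * (1 - z ^ (q ^ 2 + 1)) := by
  have hH : 1 + z * l' ^ q ≠ 0 := one_add_mul_pow_ne_zero hz hl'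
  have hDq : (l - l') ^ q = l ^ q - l' ^ q := sub_pow_card l l'
  have hDsq := sub_pow_sq_mul_mul hl hl'
  have hGq : (l + z ^ q) ^ q = l ^ q + z ^ q ^ 2 := by
    rw [add_pow_card, ← pow_mul, ← sq]
  have hψl' := psi_eq_mul_pow hl' (z := z)
  have hm : (-1 : F) ^ (q + 1) = 1 := by rw [pow_succ, neg_one_pow_card]; ring
  unfold psi at hψ hψl' ⊢
  generalize hD : l - l' = D at hDq hDsq
  generalize hG : l + z ^ q = G at hψ hGq ⊢
  generalize hH' : 1 + z * l' ^ q = H at hH hψ hψl'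
  have hD0 : D ≠ 0 := hD ▸ sub_ne_zero.mpr hne
  have hDH : D ^ q * (z * G) = -(D * H) := by
    subst hD hG hH'
    rw [hDq]
    linear_combination hψ
  have hG0 : G ≠ 0 := by
    rintro rfl
    rw [mul_zero, mul_zero, zero_eq_neg] at hDH
    exact mul_ne_zero hD0 hH hDH
  -- `D ^ (q - 1)` is pinned down both by `hDH` and, through `hDsq`, by `l * l'`; comparing the
  -- two after raising to the power `q + 1` eliminates `D`.
  have hHG : H ^ (q + 1) * (l * l') = -(z * G) ^ (q + 1) := by
    have e : (D ^ q) ^ (q + 1) * (z * G) ^ (q + 1) = D ^ (q + 1) * H ^ (q + 1) := by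
      rw [← mul_pow, hDH, neg_pow, hm, one_mul, mul_pow]
    apply mul_left_cancel₀ (pow_ne_zero (q + 1) hD0)
    linear_combination (D ^ q * (z * G) ^ (q + 1)) * hDsq - (l * l') * e
  have hlG : l * (1 + z * l ^ q) = -z ^ (q + 1) * G ^ q := by
    apply mul_left_cancel₀ hG0
    linear_combination l * hψ + l * hψl' + hHG
  linear_combination -(1 + z * l ^ q) * hG + hlG - z ^ (q + 1) * hGq

theorem psiPoly_dvd {z : F} (hz : z ^ (q ^ 2 + 1) ≠ 1) (hN : z ^ (1 + q + q ^ 2 + q ^ 3) = 1) :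
    psiPoly q z ∣ X ^ (q ^ 2 + 1) - 1 := by
  have hPq : psiPoly q z ^ q = (X ^ q + C z ^ q ^ 2) * (1 + C z ^ q * X ^ q ^ 2) -
      C z ^ q ^ 2 * (1 - C z ^ (q ^ 3 + q)) := by
    simp only [psiPoly, sub_pow_card, mul_pow, add_pow_card, one_pow, map_mul,
      map_sub, map_pow, map_one, ← pow_mul]
    ring
  have hN' : C z ^ (1 + q + q ^ 2 + q ^ 3) = 1 := by rw [← C_pow, hN, C_1]
  have key : C (z ^ q * (z ^ (q ^ 2 + 1) - 1)) * (X ^ (q ^ 2 + 1) - 1) =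
      C z * (X + C (z ^ q)) * psiPoly q z ^ q - psiPoly q z * (1 + C (z ^ q) * X ^ q ^ 2) := by
    rw [hPq, psiPoly]
    simp only [map_mul, map_sub, map_pow, map_one]
    linear_combination -(X + C z ^ q) * hN'
  have hz0 : z ≠ 0 := by rintro rfl; simp at hN
  have hunit : IsUnit (C (z ^ q * (z ^ (q ^ 2 + 1) - 1))) :=
    isUnit_C.mpr (mul_ne_zero (pow_ne_zero _ hz0) (sub_ne_zero.mpr hz)).isUnit
  rw [← hunit.dvd_mul_left, key]
  exact dvd_sub (dvd_mul_of_dvd_right (dvd_pow_self _ Fintype.card_ne_zero) _) (dvd_mul_right _ _)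

theorem mul_one_sub_pow_pow_eq_one {z : F} (hz : z ^ (q ^ 2 + 1) ≠ 1)
    (hN : z ^ (1 + q + q ^ 2 + q ^ 3) = 1) :
    (z ^ q * (1 - z ^ (q ^ 2 + 1))) ^ ((q ^ 2 + 1) * (q - 1)) = 1 := by
  have hq : 1 < q := Fintype.one_lt_card
  have hy : (z ^ (q ^ 2 + 1)) ^ (q + 1) = 1 := by rw [← pow_mul, ← hN]; ring_nf
  generalize hy' : z ^ (q ^ 2 + 1) = y at hz hy
  have hy0 : y ≠ 0 := by rintro rfl; simp at hy
  have hyq : y ^ q ^ 2 = y := by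
    have : y ^ q ^ 2 = (y ^ (q + 1)) ^ (q - 1) * y := by
      rw [← pow_mul, ← pow_succ, ← Nat.sq_sub_sq, one_pow,
        Nat.sub_add_cancel (Nat.one_le_pow _ _ (by omega))]
    rw [this, hy, one_pow, one_mul]
  have hv : (z ^ q * (1 - y)) ^ (q ^ 2 + 1) = y ^ q * (1 - y) ^ 2 := by
    rw [mul_pow, ← pow_mul, mul_comm q, pow_mul, hy', pow_succ (1 - y), sq, pow_mul,
      sub_pow_card, sub_pow_card, one_pow, one_pow, ← pow_mul, ← sq, hyq]
    ring
  have hw : (y ^ q * (1 - y) ^ 2) ^ q = y ^ q * (1 - y) ^ 2 := by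
    rw [mul_pow, ← pow_mul, ← sq, hyq, ← pow_mul, mul_comm 2 q, pow_mul,
      sub_pow_card, one_pow]
    linear_combination (y ^ q - y) * hy
  have hw0 : y ^ q * (1 - y) ^ 2 ≠ 0 :=
    mul_ne_zero (pow_ne_zero _ hy0) (pow_ne_zero _ (sub_ne_zero.mpr (Ne.symm hz)))
  rw [pow_mul, hv]
  apply mul_left_cancel₀ hw0
  rw [← pow_succ', Nat.sub_add_cancel hq.le, hw, mul_one]

variable [Fintype F] [DecidableEq F]

theorem card_psi_eq (hF : Fintype.card F = q ^ 4) {z : F} (hz : z ^ (q ^ 2 + 1) ≠ 1)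
    (hN : z ^ (1 + q + q ^ 2 + q ^ 3) = 1) :
    #{l : F | l ^ (q ^ 2 + 1) = 1 ∧ psi q z l = z ^ q * (1 - z ^ (q ^ 2 + 1))} = q + 1 := by
  have hq : q ≠ 0 := Fintype.card_ne_zero
  have hz0 : z ≠ 0 := by rintro rfl; simp at hN
  have hP0 : psiPoly q z ≠ 0 := by
    intro h; have := natDegree_psiPoly hq hz0; rw [h, natDegree_zero] at this; omega
  have hdvd := psiPoly_dvd hz hN
  have hU0 : (X ^ (q ^ 2 + 1) - 1 : F[X]) ≠ 0 := by
    simpa using X_pow_sub_C_ne_zero (Nat.succ_pos (q ^ 2)) (1 : F)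
  obtain ⟨ζ, hζ⟩ := FiniteField.exists_isPrimitiveRoot_of_dvd (F := F) (m := q ^ 2 + 1)
    ⟨(q - 1) * (q + 1), by rw [hF, Nat.pow_four_sub_one]; ring⟩
  have hroots : (psiPoly q z).roots ≤ nthRoots (q ^ 2 + 1) (1 : F) := by
    rw [nthRoots, C_1]; exact roots.le_of_dvd hU0 hdvd
  have hsplit : (psiPoly q z).Splits :=
    (X_pow_sub_one_splits hζ).of_dvd (by simpa using hU0) (by simpa using hdvd)
  have hset : ({l : F | l ^ (q ^ 2 + 1) = 1 ∧ psi q z l = z ^ q * (1 - z ^ (q ^ 2 + 1))} :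
      Finset F) = (psiPoly q z).roots.toFinset := by
    ext l
    simp only [mem_filter, mem_univ, true_and, Multiset.mem_toFinset, mem_roots hP0, IsRoot.def,
      eval_psiPoly, sub_eq_zero]
    refine ⟨And.right, fun h => ⟨?_, h⟩⟩
    have hl : l ∈ (psiPoly q z).roots := by
      rw [mem_roots hP0, IsRoot.def, eval_psiPoly, h, sub_self]
    rw [← mem_nthRoots (Nat.succ_pos _)]
    exact Multiset.mem_of_le hroots hl
  rw [hset, Multiset.toFinset_card_of_nodup (Multiset.nodup_of_le hroots (hζ.nthRoots_one_nodup)),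
    splits_iff_card_roots.mp hsplit, natDegree_psiPoly hq hz0]

theorem card_kernel (hF : Fintype.card F = q ^ 4) (z b : F) :
    #{x : F | -x + z * b * x ^ q ^ 3 + b * x ^ q = 0} =
      1 + (q - 1) * #{l : F | l ^ (q ^ 2 + 1) = 1 ∧ b ^ (q + 1) * psi q z l = 1} := by
  have hq : 1 < q := Fintype.one_lt_card
  have hsq : q ^ 2 - 1 = (q - 1) * (q + 1) := by
    rw [mul_comm]; simpa using Nat.sq_sub_sq q 1
  have hcl : ∀ l : F, l ^ (q ^ 2 + 1) = 1 →
      b ^ (q + 1) * psi q z l = (b * (1 + z * l ^ q)) ^ (q + 1) * l := by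
    intro l hl; rw [psi_eq_mul_pow hl, mul_pow]; ring
  set S : Finset F := {l : F | l ^ (q ^ 2 + 1) = 1 ∧ b ^ (q + 1) * psi q z l = 1}
  set T : Finset F := {x : F | x ^ (q - 1) * (b * (1 + z * (x ^ (q ^ 2 - 1)) ^ q)) = 1}
  have hker : ({x : F | -x + z * b * x ^ q ^ 3 + b * x ^ q = 0} : Finset F) = insert 0 T := by
    ext x
    rcases eq_or_ne x 0 with rfl | hx
    · simp [zero_pow (pow_ne_zero 3 (by omega : q ≠ 0)), zero_pow (by omega : q ≠ 0)]
    · simp [T, linearized_eq_mul (by omega : q ≠ 0), hx, sub_eq_zero]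
  have hT0 : (0 : F) ∉ T := by simp [T, zero_pow (by omega : q - 1 ≠ 0)]
  have hmaps : ∀ x ∈ T, x ^ (q ^ 2 - 1) ∈ S := by
    intro x hx
    simp only [T, S, mem_filter, mem_univ, true_and] at hx ⊢
    have hx0 : x ≠ 0 := by rintro rfl; simp [zero_pow (by omega : q - 1 ≠ 0)] at hx
    have hU : (x ^ (q ^ 2 - 1)) ^ (q ^ 2 + 1) = 1 := by
      rw [← pow_mul, hsq, ← Nat.pow_four_sub_one, ← hF]
      exact FiniteField.pow_card_sub_one_eq_one x hx0
    refine ⟨hU, ?_⟩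
    calc b ^ (q + 1) * psi q z (x ^ (q ^ 2 - 1))
        = (b * (1 + z * (x ^ (q ^ 2 - 1)) ^ q)) ^ (q + 1) * (x ^ (q - 1)) ^ (q + 1) := by
          rw [hcl _ hU, ← pow_mul x (q - 1) (q + 1), ← hsq]
      _ = 1 := by rw [← mul_pow, mul_comm, hx, one_pow]
  have hfib : ∀ l ∈ S, #{x ∈ T | x ^ (q ^ 2 - 1) = l} = q - 1 := by
    intro l hl
    simp only [S, mem_filter, mem_univ, true_and] at hl
    have hc := eq_inv_of_mul_eq_one_right ((hcl l hl.1).symm.trans hl.2)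
    have hc0 : b * (1 + z * l ^ q) ≠ 0 := by
      rintro h
      rw [h, zero_pow (by omega), inv_zero] at hc
      simp [hc] at hl
    have hfiber :
        {x ∈ T | x ^ (q ^ 2 - 1) = l} = nthRootsFinset (q - 1) (b * (1 + z * l ^ q))⁻¹ := by
      ext x
      simp only [T, mem_filter, mem_univ, true_and, mem_nthRootsFinset (by omega : 0 < q - 1)]
      constructor
      · rintro ⟨hx, rfl⟩
        exact eq_inv_of_mul_eq_one_left hx
      · intro hx
        have hxl : x ^ (q ^ 2 - 1) = l := by rw [hsq, pow_mul, hx, inv_pow, ← hc]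
        rw [hxl, hx, inv_mul_cancel₀ hc0]
        exact ⟨rfl, rfl⟩
    rw [hfiber]
    refine FiniteField.card_nthRootsFinset_of_pow_eq_one (r := (q + 1) * (q ^ 2 + 1))
      (by rw [hF, Nat.pow_four_sub_one]; ring) ?_
    rw [pow_mul, inv_pow, ← hc, hl.1]
  rw [hker, card_insert_of_notMem hT0, card_eq_sum_card_fiberwise hmaps, sum_congr rfl hfib,
    sum_const, smul_eq_mul, add_comm, mul_comm]

theorem card_kernel_eq_sq_iff (hF : Fintype.card F = q ^ 4) {z : F} (hz : z ^ (q ^ 2 + 1) ≠ 1)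
    (hN : z ^ (1 + q + q ^ 2 + q ^ 3) = 1) (b : F) :
    #{x : F | -x + z * b * x ^ q ^ 3 + b * x ^ q = 0} = q ^ 2 ↔
      b ^ (q + 1) * (z ^ q * (1 - z ^ (q ^ 2 + 1))) = 1 := by
  have hq : 1 < q := Fintype.one_lt_card
  have hsq : q ^ 2 = 1 + (q - 1) * (q + 1) := by
    rw [mul_comm, ← Nat.sq_sub_sq, one_pow, Nat.add_sub_cancel' (Nat.one_le_pow _ _ (by omega))]
  have hcount : ∀ s, 1 + (q - 1) * s = q ^ 2 ↔ s = q + 1 := fun s => by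
    rw [hsq, add_right_inj, mul_right_inj' (by omega : q - 1 ≠ 0)]
  rw [card_kernel hF, hcount]
  set S : Finset F := {l : F | l ^ (q ^ 2 + 1) = 1 ∧ b ^ (q + 1) * psi q z l = 1}
  constructor
  · intro hS
    obtain ⟨l, hl, l', hl', hne⟩ := one_lt_card.mp (by omega : 1 < #S)
    simp only [S, mem_filter, mem_univ, true_and] at hl hl'
    have hb : b ^ (q + 1) ≠ 0 := left_ne_zero_of_mul_eq_one hl.2
    rw [← psi_eq_of_psi_eq hz hl.1 hl'.1 hne (mul_left_cancel₀ hb (hl.2.trans hl'.2.symm))]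
    exact hl.2
  · intro hb
    refine (congrArg card (filter_congr fun l _ => and_congr_right fun _ => ?_)).trans
      (card_psi_eq hF hz hN)
    exact ⟨fun h => mul_left_cancel₀ (left_ne_zero_of_mul_eq_one hb) (h.trans hb.symm),
      fun h => h ▸ hb⟩

theorem finrank_ker_eq_two_iff (hF : Fintype.card F = q ^ 4) {z b : F}
    (hz : z ^ (q ^ 2 + 1) ≠ 1) (hN : z ^ (1 + q + q ^ 2 + q ^ 3) = 1) {f : F →ₗ[K] F}
    (hf : ∀ x, f x = -x + z * b * x ^ q ^ 3 + b * x ^ q) :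
    Module.finrank K (LinearMap.ker f) = 2 ↔
      b ^ (q + 1) * (z ^ q * (1 - z ^ (q ^ 2 + 1))) = 1 := by
  rw [finrank_ker_eq_iff_card, ← card_kernel_eq_sq_iff hF hz hN]
  simp only [hf]

end NormOne

theorem stmt_16 (q : ℕ) (Fq F : Type*) [Field Fq] [Field F] [Algebra Fq F]
    [Fintype Fq] [Fintype F]
    (hq : Fintype.card Fq = q) (hF : Fintype.card F = q ^ 4)
    (z : F) (hzN : z ^ (1 + q + q ^ 2 + q ^ 3) = 1) (hzN2 : z ^ (q ^ 2 + 1) ≠ 1) :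
    Set.ncard {b1 : F | ∃ f : F →ₗ[Fq] F,
        (∀ x, f x = -x + (z * b1) * x ^ q ^ 3 + b1 * x ^ q) ∧
        Module.finrank Fq (LinearMap.ker f) = 2} = q + 1 := by
  classical
  subst hq
  set q := Fintype.card Fq
  set v := z ^ q * (1 - z ^ (q ^ 2 + 1))
  have hv : v ^ ((q ^ 2 + 1) * (q - 1)) = 1 := mul_one_sub_pow_pow_eq_one hzN2 hzN
  have hv0 : v ≠ 0 := (IsUnit.of_pow_eq_one hv (Nat.mul_ne_zero (Nat.succ_ne_zero _)
    (Nat.sub_ne_zero_of_lt Fintype.one_lt_card))).ne_zero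
  refine (congrArg Set.ncard
    (Set.ext fun b => ?_ : _ = (nthRootsFinset (q + 1) v⁻¹ : Set F))).trans ?_
  · rw [mem_coe, mem_nthRootsFinset (Nat.succ_pos _), ← mul_eq_one_iff_eq_inv₀ hv0]
    constructor
    · rintro ⟨f, hf, hrank⟩
      exact (finrank_ker_eq_two_iff hF hzN2 hzN hf).mp hrank
    · intro hb
      obtain ⟨f, hf⟩ := exists_linearMap_eq (K := Fq) (z * b) b
      exact ⟨f, hf, (finrank_ker_eq_two_iff hF hzN2 hzN hf).mpr hb⟩
  rw [Set.ncard_coe_finset]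
  refine FiniteField.card_nthRootsFinset_of_pow_eq_one (r := (q ^ 2 + 1) * (q - 1))
    (by rw [hF, Nat.pow_four_sub_one]; ring) ?_
  rw [inv_pow, hv, inv_one]
end

section
/- Let f(x) = -x + b₀x^{q⁵} + b₁x^{q²} ∈ F_{q⁶}[x] with b₀,b₁ ≠ 0, α = b₁/b₀, and suppose dim_{F_q} ker f = 2. Then α^{q³+1} ≠ 1, and setting A = -α^{q³+1}/(1-α^{q³+1}), the quadratic Y² - (Tr_{q³/q}(A) - 1)Y + N_{q³/q}(A) = 0 has either one root in F_q or two roots in F_{q²}∖F_q. -/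
/-!
A kernel element `z` satisfies `z^{q^{k+1}} = b₀^{q^{k+1}} z^{q^k} + b₁^{q^{k+1}} z^{q^{k+3}}`,
so the pair `(z, z^{q³})` is carried to `(z^{q³}, z)` by a product `N₃N₂N₁` of Frobenius twists
`N_k = [[b₀^{q^k}, b₁^{q^k}], [b₁^{q^{k+3}}, b₀^{q^{k+3}}]]`. Two `F_q`-independent kernel
elements give `F`-independent pairs (a dependence would make their quotient Frobenius-fixed),
so `N₃N₂N₁`, and hence also `N₂N₁N₀`, is the swap matrix `J`. The first row of `N₂N₁N₀ = J`
gives `A = b₁ (b₀^{q+q²} + b₁^{q²+q⁴})` and `Tr(A) - 1 = Y + Y^q` for `Y = b₁^{1+q²+q⁴}`; its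
determinant gives `δ^{1+q+q²} = -1` for `δ = b₀^{1+q³} - b₁^{1+q³}`, whence `N(A) = Y^{1+q}`.
So the quadratic is `(y - Y)(y - Y^q)`, and `Y^{q²} = Y`.
-/

open Matrix

theorem mem_range_algebraMap_of_pow_card_eq {K L : Type*} [Field K] [Fintype K] [Field L]
    [Finite L] [Algebra K L] {x : L} (hx : x ^ Fintype.card K = x) :
    x ∈ Set.range (algebraMap K L) := by
  have : FiniteDimensional K L := Module.Finite.of_finite
  rw [IsGalois.mem_range_algebraMap_iff_fixed]
  intro f
  obtain ⟨n, rfl⟩ := (FiniteField.bijective_frobeniusAlgEquivOfAlgebraic_pow K L).2 f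
  rw [AlgEquiv.coe_pow, FiniteField.coe_frobeniusAlgEquivOfAlgebraic]
  exact Function.iterate_fixed hx n

theorem exists_smul_eq_of_pow_card_eq_mul {K L : Type*} [Field K] [Fintype K] [Field L]
    [Finite L] [Algebra K L] {ρ X Y : L} (hX : X ≠ 0) (hXρ : X ^ Fintype.card K = ρ * X)
    (hYρ : Y ^ Fintype.card K = ρ * Y) : ∃ c : K, c • X = Y := by
  have hρ : ρ ≠ 0 := by
    rintro rfl
    exact hX (by simpa using hXρ)
  obtain ⟨c, hc⟩ := mem_range_algebraMap_of_pow_card_eq (K := K) (x := Y / X) (by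
    rw [div_pow, hXρ, hYρ, mul_div_mul_left _ _ hρ])
  exact ⟨c, by rw [Algebra.smul_def, hc, div_mul_cancel₀ _ hX]⟩

theorem pow_pow_pow_succ {M : Type*} [Monoid M] {q : ℕ} (x : M) (k : ℕ) :
    (x ^ q ^ k) ^ q = x ^ q ^ (k + 1) := by
  rw [← pow_mul, pow_succ]

theorem pow_pow_eq_pow_sq {M : Type*} [Monoid M] {q : ℕ} (x : M) : (x ^ q) ^ q = x ^ q ^ 2 := by
  rw [← pow_mul, sq]

theorem pow_pow_add_six {M : Type*} [Monoid M] {q : ℕ} (hper : ∀ x : M, x ^ q ^ 6 = x) (x : M)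
    (k : ℕ) : x ^ q ^ (k + 6) = x ^ q ^ k := by
  rw [pow_add, mul_comm, pow_mul, hper]

theorem sub_pow_of_add_pow {R : Type*} [CommRing R] {q : ℕ}
    (hadd : ∀ x y : R, (x + y) ^ q = x ^ q + y ^ q) (x y : R) : (x - y) ^ q = x ^ q - y ^ q :=
  map_sub (RingHom.mk' (powMonoidHom q) hadd : R →+* R) x y

theorem neg_pow_of_add_pow {R : Type*} [CommRing R] {q : ℕ}
    (hadd : ∀ x y : R, (x + y) ^ q = x ^ q + y ^ q) (x : R) : (-x) ^ q = -x ^ q :=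
  map_neg (RingHom.mk' (powMonoidHom q) hadd : R →+* R) x

theorem exists_ne_smul_of_finrank_eq_two {K V : Type*} [Field K] [AddCommGroup V] [Module K V]
    {S : Submodule K V} (hS : Module.finrank K S = 2) :
    ∃ X ∈ S, ∃ Y ∈ S, X ≠ 0 ∧ ∀ c : K, c • X ≠ Y := by
  have : Module.Finite K S := Module.finite_of_finrank_eq_succ hS
  let e := Module.finBasisOfFinrankEq K S hS
  obtain ⟨h0, h1⟩ := linearIndependent_fin2.mp (e.linearIndependent.map' _ S.ker_subtype)
  exact ⟨e 1, (e 1).2, e 0, (e 0).2, h0, h1⟩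

section FrobeniusTwists

variable {F : Type*} [Field F] {q : ℕ}

theorem pow_pow_succ_eq_of_eq_mul_add {b0 b1 z : F}
    (hadd : ∀ x y : F, (x + y) ^ q = x ^ q + y ^ q) (hper : ∀ x : F, x ^ q ^ 6 = x)
    (hz : z = b0 * z ^ q ^ 5 + b1 * z ^ q ^ 2) (k : ℕ) :
    z ^ q ^ (k + 1) = b0 ^ q ^ (k + 1) * z ^ q ^ k + b1 ^ q ^ (k + 1) * z ^ q ^ (k + 3) := by
  induction k with
  | zero =>
    have h := congrArg (· ^ q) hz
    simp only [hadd, mul_pow, pow_pow_pow_succ, Nat.reduceAdd, hper] at h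
    simpa using h
  | succ k ih =>
    have h := congrArg (· ^ q) ih
    simp only [hadd, mul_pow, pow_pow_pow_succ] at h
    rwa [show k + 3 + 1 = k + 1 + 3 by ring] at h

def twistMatrix (q : ℕ) (a b : F) (k : ℕ) : Matrix (Fin 2) (Fin 2) F :=
  !![a ^ q ^ k, b ^ q ^ k; b ^ q ^ (k + 3), a ^ q ^ (k + 3)]

theorem twistMatrix_mulVec {b0 b1 z : F}
    (hadd : ∀ x y : F, (x + y) ^ q = x ^ q + y ^ q) (hper : ∀ x : F, x ^ q ^ 6 = x)
    (hz : z = b0 * z ^ q ^ 5 + b1 * z ^ q ^ 2) (k : ℕ) :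
    twistMatrix q b0 b1 (k + 1) *ᵥ ![z ^ q ^ k, z ^ q ^ (k + 3)] =
      ![z ^ q ^ (k + 1), z ^ q ^ (k + 4)] := by
  have h := pow_pow_succ_eq_of_eq_mul_add hadd hper hz (k + 3)
  rw [show k + 3 + 3 = k + 6 by ring, pow_pow_add_six hper] at h
  rw [twistMatrix, mulVec_fin_two, show k + 1 + 3 = k + 3 + 1 by ring,
    show k + 4 = k + 3 + 1 by ring]
  simp only [of_apply, cons_val', cons_val_zero, cons_val_one, empty_val', cons_val_fin_one,
    vecCons_inj, and_true]
  rw [h]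
  exact ⟨(pow_pow_succ_eq_of_eq_mul_add hadd hper hz k).symm, add_comm _ _⟩

theorem twistMatrix_mul_mul_mulVec {b0 b1 z : F}
    (hadd : ∀ x y : F, (x + y) ^ q = x ^ q + y ^ q) (hper : ∀ x : F, x ^ q ^ 6 = x)
    (hz : z = b0 * z ^ q ^ 5 + b1 * z ^ q ^ 2) :
    (twistMatrix q b0 b1 3 * twistMatrix q b0 b1 2 * twistMatrix q b0 b1 1) *ᵥ ![z, z ^ q ^ 3] =
      !![0, 1; 1, 0] *ᵥ ![z, z ^ q ^ 3] := by
  have h0 := twistMatrix_mulVec hadd hper hz 0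
  have h1 := twistMatrix_mulVec hadd hper hz 1
  have h2 := twistMatrix_mulVec hadd hper hz 2
  simp only [Nat.reduceAdd, pow_zero, pow_one] at h0 h1 h2
  rw [← mulVec_mulVec, ← mulVec_mulVec, h0, h1, h2, hper, mulVec_fin_two]
  simp

theorem eq_zero_of_mul_add_pow_eq_zero {K : Type*} [Field K] [Fintype K] [Algebra K F] [Finite F]
    (hq : Fintype.card K = q) {b0 b1 X Y a b : F}
    (hX : X ^ q = b0 ^ q * X + b1 ^ q * X ^ q ^ 3) (hY : Y ^ q = b0 ^ q * Y + b1 ^ q * Y ^ q ^ 3)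
    (hX0 : X ≠ 0) (hXY : ∀ c : K, c • X ≠ Y)
    (haX : a * X + b * X ^ q ^ 3 = 0) (haY : a * Y + b * Y ^ q ^ 3 = 0) : a = 0 ∧ b = 0 := by
  by_cases hb : b = 0
  · subst hb
    exact ⟨(mul_eq_zero.mp (by simpa using haX)).resolve_right hX0, rfl⟩
  · -- `Y / X` would be fixed by the Frobenius, hence a scalar
    have hX3 : X ^ q ^ 3 = -a / b * X := by field_simp; linear_combination haX
    have hY3 : Y ^ q ^ 3 = -a / b * Y := by field_simp; linear_combination haY
    obtain ⟨c, hc⟩ := exists_smul_eq_of_pow_card_eq_mul (K := K) (ρ := b0 ^ q + b1 ^ q * (-a / b))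
      hX0 (by rw [hq, hX, hX3]; ring) (by rw [hq, hY, hY3]; ring)
    exact absurd hc (hXY c)

theorem twistMatrix_mul_mul_eq_swap {K : Type*} [Field K] [Fintype K] [Algebra K F] [Finite F]
    (hq : Fintype.card K = q) (hadd : ∀ x y : F, (x + y) ^ q = x ^ q + y ^ q)
    (hper : ∀ x : F, x ^ q ^ 6 = x) {b0 b1 X Y : F}
    (hX : X = b0 * X ^ q ^ 5 + b1 * X ^ q ^ 2) (hY : Y = b0 * Y ^ q ^ 5 + b1 * Y ^ q ^ 2)
    (hX0 : X ≠ 0) (hXY : ∀ c : K, c • X ≠ Y) :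
    twistMatrix q b0 b1 3 * twistMatrix q b0 b1 2 * twistMatrix q b0 b1 1 = !![0, 1; 1, 0] := by
  set M := twistMatrix q b0 b1 3 * twistMatrix q b0 b1 2 * twistMatrix q b0 b1 1 - !![0, 1; 1, 0]
  have hMX : M *ᵥ ![X, X ^ q ^ 3] = 0 := by
    rw [sub_mulVec, twistMatrix_mul_mul_mulVec hadd hper hX, sub_self]
  have hMY : M *ᵥ ![Y, Y ^ q ^ 3] = 0 := by
    rw [sub_mulVec, twistMatrix_mul_mul_mulVec hadd hper hY, sub_self]
  have hrel (z : F) (hz : z = b0 * z ^ q ^ 5 + b1 * z ^ q ^ 2) :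
      z ^ q = b0 ^ q * z + b1 ^ q * z ^ q ^ 3 := by
    simpa using pow_pow_succ_eq_of_eq_mul_add hadd hper hz 0
  suffices M = 0 from sub_eq_zero.mp this
  ext i j
  have hi := eq_zero_of_mul_add_pow_eq_zero (a := M i 0) (b := M i 1) hq (hrel X hX) (hrel Y hY)
    hX0 hXY (by simpa [mulVec, dotProduct] using congrFun hMX i)
    (by simpa [mulVec, dotProduct] using congrFun hMY i)
  fin_cases j
  exacts [hi.1, hi.2]

theorem twistMatrix_rotate (hper : ∀ x : F, x ^ q ^ 6 = x) {b0 b1 : F}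
    (h : twistMatrix q b0 b1 3 * twistMatrix q b0 b1 2 * twistMatrix q b0 b1 1 = !![0, 1; 1, 0]) :
    twistMatrix q b0 b1 2 * twistMatrix q b0 b1 1 * twistMatrix q b0 b1 0 = !![0, 1; 1, 0] := by
  set J : Matrix (Fin 2) (Fin 2) F := !![0, 1; 1, 0]
  have hJJ : J * J = 1 := by simp [J, one_fin_two]
  have hN3 : twistMatrix q b0 b1 3 = J * twistMatrix q b0 b1 0 * J := by
    simp [J, twistMatrix, hper]
  have h0 : twistMatrix q b0 b1 0 * (J * twistMatrix q b0 b1 2 * twistMatrix q b0 b1 1) = 1 :=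
    calc _ = J * (J * twistMatrix q b0 b1 0 * J * twistMatrix q b0 b1 2 * twistMatrix q b0 b1 1) :=
          by simp only [← mul_assoc, hJJ, one_mul]
      _ = 1 := by rw [← hN3, h, hJJ]
  calc _ = J * (J * twistMatrix q b0 b1 2 * twistMatrix q b0 b1 1 * twistMatrix q b0 b1 0) := by
        simp only [← mul_assoc, hJJ, one_mul]
    _ = J := by rw [mul_eq_one_comm.mp h0, mul_one]

theorem twistMatrix_det_mul {b0 b1 : F}
    (hJ : twistMatrix q b0 b1 2 * twistMatrix q b0 b1 1 * twistMatrix q b0 b1 0 = !![0, 1; 1, 0]) :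
    (b0 * b0 ^ q ^ 3 - b1 * b1 ^ q ^ 3) * (b0 ^ q * b0 ^ q ^ 4 - b1 ^ q * b1 ^ q ^ 4) *
      (b0 ^ q ^ 2 * b0 ^ q ^ 5 - b1 ^ q ^ 2 * b1 ^ q ^ 5) = -1 := by
  have h := congrArg det hJ
  simp only [det_mul, twistMatrix, det_fin_two_of, Nat.reduceAdd, pow_zero, pow_one] at h
  linear_combination h

theorem twistMatrix_zero_det_ne_zero {b0 b1 : F}
    (hJ : twistMatrix q b0 b1 2 * twistMatrix q b0 b1 1 * twistMatrix q b0 b1 0 = !![0, 1; 1, 0]) :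
    b0 * b0 ^ q ^ 3 - b1 * b1 ^ q ^ 3 ≠ 0 := fun h ↦ by
  simpa [h] using twistMatrix_det_mul hJ

theorem twistMatrix_entries {b0 b1 : F}
    (hJ : twistMatrix q b0 b1 2 * twistMatrix q b0 b1 1 * twistMatrix q b0 b1 0 = !![0, 1; 1, 0]) :
    (b0 ^ q ^ 2 * b0 ^ q + b1 ^ q ^ 2 * b1 ^ q ^ 4) * b0 +
        (b0 ^ q ^ 2 * b1 ^ q + b1 ^ q ^ 2 * b0 ^ q ^ 4) * b1 ^ q ^ 3 = 0 ∧
      (b0 ^ q ^ 2 * b0 ^ q + b1 ^ q ^ 2 * b1 ^ q ^ 4) * b1 +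
        (b0 ^ q ^ 2 * b1 ^ q + b1 ^ q ^ 2 * b0 ^ q ^ 4) * b0 ^ q ^ 3 = 1 := by
  constructor
  · simpa [twistMatrix] using congrFun₂ hJ 0 0
  · simpa [twistMatrix] using congrFun₂ hJ 0 1

theorem eq_mul_of_twistMatrix {b0 b1 A : F}
    (hJ : twistMatrix q b0 b1 2 * twistMatrix q b0 b1 1 * twistMatrix q b0 b1 0 = !![0, 1; 1, 0])
    (hA : A * (b0 * b0 ^ q ^ 3 - b1 * b1 ^ q ^ 3) = -(b1 * b1 ^ q ^ 3)) :
    A = b1 * (b0 ^ q * b0 ^ q ^ 2 + b1 ^ q ^ 2 * b1 ^ q ^ 4) := by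
  obtain ⟨h11, h12⟩ := twistMatrix_entries hJ
  apply mul_right_cancel₀ (twistMatrix_zero_det_ne_zero hJ)
  linear_combination hA - b1 * (b0 ^ q ^ 3 * h11 - b1 ^ q ^ 3 * h12)

theorem trace_eq_of_twistMatrix (hadd : ∀ x y : F, (x + y) ^ q = x ^ q + y ^ q)
    (hper : ∀ x : F, x ^ q ^ 6 = x) {b0 b1 A : F}
    (hJ : twistMatrix q b0 b1 2 * twistMatrix q b0 b1 1 * twistMatrix q b0 b1 0 = !![0, 1; 1, 0])
    (hA : A * (b0 * b0 ^ q ^ 3 - b1 * b1 ^ q ^ 3) = -(b1 * b1 ^ q ^ 3)) :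
    A + A ^ q + A ^ q ^ 2 - 1 =
      b1 * b1 ^ q ^ 2 * b1 ^ q ^ 4 + (b1 * b1 ^ q ^ 2 * b1 ^ q ^ 4) ^ q := by
  have hA0 := eq_mul_of_twistMatrix hJ hA
  have hA1 : A ^ q = b1 ^ q * (b0 ^ q ^ 2 * b0 ^ q ^ 3 + b1 ^ q ^ 3 * b1 ^ q ^ 5) := by
    simp only [hA0, hadd, mul_pow, pow_pow_eq_pow_sq, pow_pow_pow_succ, Nat.reduceAdd]
  have hA2 : A ^ q ^ 2 = b1 ^ q ^ 2 * (b0 ^ q ^ 3 * b0 ^ q ^ 4 + b1 ^ q ^ 4 * b1) := by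
    rw [← pow_pow_eq_pow_sq, hA1]
    simp only [hadd, mul_pow, pow_pow_eq_pow_sq, pow_pow_pow_succ, Nat.reduceAdd, hper]
  simp only [hA1, hA2, mul_pow, pow_pow_pow_succ, Nat.reduceAdd]
  rw [hA0]
  linear_combination (twistMatrix_entries hJ).2

theorem norm_eq_of_twistMatrix (hadd : ∀ x y : F, (x + y) ^ q = x ^ q + y ^ q) {b0 b1 A : F}
    (hJ : twistMatrix q b0 b1 2 * twistMatrix q b0 b1 1 * twistMatrix q b0 b1 0 = !![0, 1; 1, 0])
    (hA : A * (b0 * b0 ^ q ^ 3 - b1 * b1 ^ q ^ 3) = -(b1 * b1 ^ q ^ 3)) :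
    A ^ (1 + q + q ^ 2) = b1 * b1 ^ q ^ 2 * b1 ^ q ^ 4 * (b1 * b1 ^ q ^ 2 * b1 ^ q ^ 4) ^ q := by
  have hA1 : A ^ q * (b0 ^ q * b0 ^ q ^ 4 - b1 ^ q * b1 ^ q ^ 4) = -(b1 ^ q * b1 ^ q ^ 4) := by
    have h := congrArg (· ^ q) hA
    simpa only [mul_pow, sub_pow_of_add_pow hadd, neg_pow_of_add_pow hadd, pow_pow_pow_succ,
      Nat.reduceAdd] using h
  have hA2 : A ^ q ^ 2 * (b0 ^ q ^ 2 * b0 ^ q ^ 5 - b1 ^ q ^ 2 * b1 ^ q ^ 5) =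
      -(b1 ^ q ^ 2 * b1 ^ q ^ 5) := by
    have h := congrArg (· ^ q) hA1
    simpa only [mul_pow, sub_pow_of_add_pow hadd, neg_pow_of_add_pow hadd, pow_pow_eq_pow_sq,
      pow_pow_pow_succ, Nat.reduceAdd] using h
  simp only [pow_add, pow_one, mul_pow, pow_pow_pow_succ, Nat.reduceAdd]
  linear_combination A * A ^ q * A ^ q ^ 2 * twistMatrix_det_mul hJ
    - A ^ q * (b0 ^ q * b0 ^ q ^ 4 - b1 ^ q * b1 ^ q ^ 4) * A ^ q ^ 2 *
      (b0 ^ q ^ 2 * b0 ^ q ^ 5 - b1 ^ q ^ 2 * b1 ^ q ^ 5) * hA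
    + b1 * b1 ^ q ^ 3 * A ^ q ^ 2 * (b0 ^ q ^ 2 * b0 ^ q ^ 5 - b1 ^ q ^ 2 * b1 ^ q ^ 5) * hA1
    - b1 * b1 ^ q ^ 3 * (b1 ^ q * b1 ^ q ^ 4) * hA2

theorem quadratic_roots_dichotomy {y : F} (hy : y ^ q ^ 2 = y) :
    (∃ r : F, r ^ q = r ∧ r ^ 2 - (y + y ^ q) * r + y * y ^ q = 0 ∧
        ∀ z : F, z ^ 2 - (y + y ^ q) * z + y * y ^ q = 0 → z = r) ∨
      (∃ r s : F, r ≠ s ∧ r ^ 2 - (y + y ^ q) * r + y * y ^ q = 0 ∧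
        s ^ 2 - (y + y ^ q) * s + y * y ^ q = 0 ∧
        r ^ q ^ 2 = r ∧ r ^ q ≠ r ∧ s ^ q ^ 2 = s ∧ s ^ q ≠ s) := by
  have hroot (z : F) : z ^ 2 - (y + y ^ q) * z + y * y ^ q = 0 ↔ z = y ∨ z = y ^ q := by
    rw [show z ^ 2 - (y + y ^ q) * z + y * y ^ q = (z - y) * (z - y ^ q) by ring, mul_eq_zero,
      sub_eq_zero, sub_eq_zero]
  have hyq : (y ^ q) ^ q = y := by rw [pow_pow_eq_pow_sq, hy]
  by_cases h : y ^ q = y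
  · refine .inl ⟨y, h, (hroot y).2 (.inl rfl), fun z hz ↦ ?_⟩
    rcases (hroot z).1 hz with rfl | rfl
    exacts [rfl, h]
  · refine .inr ⟨y, y ^ q, Ne.symm h, (hroot _).2 (.inl rfl), (hroot _).2 (.inr rfl), hy, h, ?_, ?_⟩
    · rw [← pow_pow_eq_pow_sq, hyq]
    · rw [hyq]
      exact Ne.symm h

end FrobeniusTwists

theorem stmt_17_general (q : ℕ) (Fq F : Type*) [Field Fq] [Field F] [Algebra Fq F]
    [Fintype Fq] [Fintype F]
    (hq : Fintype.card Fq = q) (hF : Fintype.card F = q ^ 6)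
    (b0 b1 : F) (hb0 : b0 ≠ 0)
    (α : F) (hα : α = b1 / b0)
    (A : F) (hA : A = -α ^ (q ^ 3 + 1) / (1 - α ^ (q ^ 3 + 1)))
    (f : F →ₗ[Fq] F)
    (hf : ∀ x, f x = -x + b0 * x ^ q ^ 5 + b1 * x ^ q ^ 2)
    (hker : Module.finrank Fq (LinearMap.ker f) = 2) :
    α ^ (q ^ 3 + 1) ≠ 1 ∧
      ((∃ y : F, y ^ q = y ∧
          y ^ 2 - (A + A ^ q + A ^ q ^ 2 - 1) * y + A ^ (1 + q + q ^ 2) = 0 ∧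
          ∀ z : F, z ^ 2 - (A + A ^ q + A ^ q ^ 2 - 1) * z + A ^ (1 + q + q ^ 2) = 0 →
            z = y) ∨
        (∃ y z : F, y ≠ z ∧
          y ^ 2 - (A + A ^ q + A ^ q ^ 2 - 1) * y + A ^ (1 + q + q ^ 2) = 0 ∧
          z ^ 2 - (A + A ^ q + A ^ q ^ 2 - 1) * z + A ^ (1 + q + q ^ 2) = 0 ∧
          y ^ q ^ 2 = y ∧ y ^ q ≠ y ∧ z ^ q ^ 2 = z ∧ z ^ q ≠ z)) := by
  have hadd (x y : F) : (x + y) ^ q = x ^ q + y ^ q :=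
    hq ▸ map_add (FiniteField.frobeniusAlgHom Fq F) x y
  have hper (x : F) : x ^ q ^ 6 = x := hF ▸ FiniteField.pow_card x
  obtain ⟨X, hX, Y, hY, hX0, hXY⟩ := exists_ne_smul_of_finrank_eq_two hker
  have hJ := twistMatrix_rotate hper <|
    twistMatrix_mul_mul_eq_swap (b0 := b0) (b1 := b1) hq hadd hper
      (by linear_combination -(hf X).symm.trans hX) (by linear_combination -(hf Y).symm.trans hY)
      hX0 hXY
  have hδ := twistMatrix_zero_det_ne_zero hJ
  have hb : b0 * b0 ^ q ^ 3 ≠ 0 := mul_ne_zero hb0 (pow_ne_zero _ hb0)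
  have hαpow : α ^ (q ^ 3 + 1) = b1 * b1 ^ q ^ 3 / (b0 * b0 ^ q ^ 3) := by
    rw [hα]
    ring
  have hα1 : α ^ (q ^ 3 + 1) ≠ 1 := by
    rw [hαpow, ne_eq, div_eq_one_iff_eq hb]
    exact fun h ↦ hδ (by rw [h, sub_self])
  have hAδ : A * (b0 * b0 ^ q ^ 3 - b1 * b1 ^ q ^ 3) = -(b1 * b1 ^ q ^ 3) := by
    rw [hA, hαpow]
    field_simp
  refine ⟨hα1, ?_⟩
  rw [trace_eq_of_twistMatrix hadd hper hJ hAδ, norm_eq_of_twistMatrix hadd hJ hAδ]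
  refine quadratic_roots_dichotomy ?_
  rw [← pow_pow_eq_pow_sq]
  simp only [mul_pow, pow_pow_eq_pow_sq, pow_pow_pow_succ, Nat.reduceAdd, hper]
  ring

theorem stmt_17 (q : ℕ) (Fq F : Type*) [Field Fq] [Field F] [Algebra Fq F]
    [Fintype Fq] [Fintype F]
    (hq : Fintype.card Fq = q) (hF : Fintype.card F = q ^ 6)
    (b0 b1 : F) (hb0 : b0 ≠ 0) (hb1 : b1 ≠ 0)
    (α : F) (hα : α = b1 / b0)
    (A : F) (hA : A = -α ^ (q ^ 3 + 1) / (1 - α ^ (q ^ 3 + 1)))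
    (f : F →ₗ[Fq] F)
    (hf : ∀ x, f x = -x + b0 * x ^ q ^ 5 + b1 * x ^ q ^ 2)
    (hker : Module.finrank Fq (LinearMap.ker f) = 2) :
    α ^ (q ^ 3 + 1) ≠ 1 ∧
      ((∃ y : F, y ^ q = y ∧
          y ^ 2 - (A + A ^ q + A ^ q ^ 2 - 1) * y + A ^ (1 + q + q ^ 2) = 0 ∧
          ∀ z : F, z ^ 2 - (A + A ^ q + A ^ q ^ 2 - 1) * z + A ^ (1 + q + q ^ 2) = 0 →
            z = y) ∨
        (∃ y z : F, y ≠ z ∧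
          y ^ 2 - (A + A ^ q + A ^ q ^ 2 - 1) * y + A ^ (1 + q + q ^ 2) = 0 ∧
          z ^ 2 - (A + A ^ q + A ^ q ^ 2 - 1) * z + A ^ (1 + q + q ^ 2) = 0 ∧
          y ^ q ^ 2 = y ∧ y ^ q ≠ y ∧ z ^ q ^ 2 = z ∧ z ^ q ≠ z)) :=
  stmt_17_general q Fq F hq hF b0 b1 hb0 α hα A hA f hf hker
end
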